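/- arXiv:q-bio/0611028 — 4 statements merged into one kernel-verified Lean document; each statement's English description precedes it below -/
import Mathlib

section
/- Let p = (φ_2^+, …, φ_n^+) be the upper corner of Z^1 (so Z^1 = [0,p]). Then the Poincaré map satisfies Tp < p coordinatewise. -/
open Filter Topology Set

noncomputable section

/-- Exit direction `s_k` (as a 0-based coordinate of `Fin n`) of the `k`-th box of the
cycle `C`, for `k = 1, …, 2n` (and periodically in `k`): in the paper's 1-based notation,
`s_k = k` for `1 ≤ k ≤ n` and `s_{n+k} = k`. -/
def sIdx (n : ℕ) [NeZero n] (k : ℕ) : Fin n :=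
  ⟨(k - 1) % n, Nat.mod_lt _ (Nat.pos_of_ne_zero (NeZero.ne n))⟩

/-- The `k`-th box `a^k ∈ {0,1}^n` of the cycle `C`, for `k = 1, …, 2n` (and `a^{2n+1} = a^1`):
`a^1 = (1,…,1)`, and `a^{k+1}` is obtained from `a^k` by flipping coordinate `s_k`.
Coordinate `j : Fin n` (0-based) represents the paper's variable `j+1`. -/
def boxC (n : ℕ) (k : ℕ) (j : Fin n) : Bool :=
  if k ≤ n + 1 then decide (k ≤ (j : ℕ) + 1) else decide ((j : ℕ) + 1 < k - n)

/-- Focal point `φ(a)` of the regular domain (orthant) indexed by `a ∈ {0,1}^n`, for the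
negative feedback loop system with focal values `φm j < 0 < φp j`:
`φ_1(a) = φ_1^-` iff `a_n = 1`, and for `j ≥ 2`, `φ_j(a) = φ_j^+` iff `a_{j-1} = 1`.
(Here `j - 1 : Fin n` is the cyclic predecessor of the coordinate `j`.) -/
def focal (n : ℕ) [NeZero n] (φm φp : Fin n → ℝ) (a : Fin n → Bool) (j : Fin n) : ℝ :=
  if (j : ℕ) = 0 then (if a (j - 1) then φm j else φp j)
  else (if a (j - 1) then φp j else φm j)

/-- Focal point `φ^k = φ(a^k)` of the `k`-th box of the cycle. -/
def phiC (n : ℕ) [NeZero n] (φm φp : Fin n → ℝ) (k : ℕ) : Fin n → ℝ :=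
  focal n φm φp (boxC n k)

/-- The local transition map `T^{a^k}` of the `k`-th box of the cycle:
`(T^{a^k} x)_j = φ^k_j + (x_j − φ^k_j)·(φ^k_{s_k}/(φ^k_{s_k} − x_{s_k}))^{γ_j/γ_{s_k}}`.
It maps the wall `{x_{s_{k-1}} = 0}` into the wall `{x_{s_k} = 0}`. -/
def transMap (n : ℕ) [NeZero n] (γ φm φp : Fin n → ℝ) (k : ℕ) (x : Fin n → ℝ) :
    Fin n → ℝ := fun j =>
  phiC n φm φp k j + (x j - phiC n φm φp k j) *
    (phiC n φm φp k (sIdx n k) / (phiC n φm φp k (sIdx n k) - x (sIdx n k)))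
      ^ (γ j / γ (sIdx n k))

/-- The Poincaré map `T = T^{a^1} ∘ T^{a^{2n}} ∘ T^{a^{2n-1}} ∘ ⋯ ∘ T^{a^2}` of the cycle
(the walls `W^i ⊂ ℝ^{n-1}` being embedded in `ℝ^n` as subsets of the hyperplanes
`{x_{s_i} = 0}`, which are preserved by the corresponding transition maps). -/
def poincare (n : ℕ) [NeZero n] (γ φm φp : Fin n → ℝ) (x : Fin n → ℝ) : Fin n → ℝ :=
  (List.range (2 * n)).foldl (fun y k => transMap n γ φm φp (k + 2) y) x

/-- The zone `Z^k ⊂ ℝ^{n-1}`, embedded in `ℝ^n` as a subset of the hyperplane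
`{x_{s_k} = 0}` (instead of dropping the coordinate `s_k`): for `1 ≤ k ≤ n` it is
`∏_{j<s_k} [φ_j^-, 0] × {0} × ∏_{j>s_k} [0, φ_j^+]`, and for `n+1 ≤ k ≤ 2n` it is
`∏_{j<s_k} [0, φ_j^+] × {0} × ∏_{j>s_k} [φ_j^-, 0]` (periodically in `k`). -/
def zoneC (n : ℕ) [NeZero n] (φm φp : Fin n → ℝ) (k : ℕ) : Set (Fin n → ℝ) :=
  {x | x (sIdx n k) = 0 ∧ ∀ j : Fin n,
    ((j : ℕ) < (sIdx n k : ℕ) →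
      x j ∈ (if (k - 1) % (2 * n) < n then Set.Icc (φm j) 0 else Set.Icc 0 (φp j))) ∧
    ((sIdx n k : ℕ) < (j : ℕ) →
      x j ∈ (if (k - 1) % (2 * n) < n then Set.Icc 0 (φp j) else Set.Icc (φm j) 0))}

end

-- ===================== auxiliary lemmas =====================

section Aux

variable {n : ℕ} [NeZero n]

lemma base_mem_pos {a x : ℝ} (ha : 0 < a) (hx : x < 0) :
    a / (a - x) ∈ Set.Ioo (0:ℝ) 1 := by
  have h : 0 < a - x := by linarith
  exact ⟨div_pos ha h, (div_lt_one h).mpr (by linarith)⟩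

lemma base_mem_neg {a x : ℝ} (ha : a < 0) (hx : 0 < x) :
    a / (a - x) ∈ Set.Ioo (0:ℝ) 1 := by
  have h : a - x < 0 := by linarith
  exact ⟨div_pos_of_neg_of_neg ha h,
    div_lt_one_iff.mpr (Or.inr (Or.inr ⟨h, by linarith⟩))⟩

lemma alpha_mem {b e : ℝ} (hb : b ∈ Set.Ioo (0:ℝ) 1) (he : 0 < e) :
    b ^ e ∈ Set.Ioo (0:ℝ) 1 :=
  ⟨Real.rpow_pos_of_pos hb.1 e, Real.rpow_lt_one hb.1.le hb.2 he⟩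

lemma move_neg {a x α : ℝ} (ha : a < 0) (hx1 : a < x) (hx2 : x ≤ 0)
    (hα : α ∈ Set.Ioo (0:ℝ) 1) : a + (x - a) * α ∈ Set.Ioo a 0 := by
  obtain ⟨h1, h2⟩ := hα
  constructor
  · nlinarith
  · nlinarith

lemma move_pos {a x α : ℝ} (ha : 0 < a) (hx1 : 0 ≤ x) (hx2 : x < a)
    (hα : α ∈ Set.Ioo (0:ℝ) 1) : a + (x - a) * α ∈ Set.Ioo 0 a := by
  obtain ⟨h1, h2⟩ := hα
  constructor
  · nlinarith
  · nlinarith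

lemma exit_eq {a x : ℝ} (h : a - x ≠ 0) : a + (x - a) * (a / (a - x)) = 0 := by
  field_simp
  ring

lemma fin_val_sub_one (hn : 2 ≤ n) (j : Fin n) :
    ((j - 1 : Fin n) : ℕ) = if (j : ℕ) = 0 then n - 1 else (j : ℕ) - 1 := by
  have h1 : ((1 : Fin n) : ℕ) = 1 := by
    rw [Fin.val_one']
    exact Nat.mod_eq_of_lt (by omega)
  have hj := j.isLt
  rw [Fin.sub_def, h1]
  show (n - 1 + (j : ℕ)) % n = _
  split_ifs with h
  · rw [h, Nat.add_zero, Nat.mod_eq_of_lt (show n - 1 < n by omega)]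
  · have h2 : n - 1 + (j : ℕ) = n + ((j : ℕ) - 1) := by omega
    rw [h2, Nat.add_mod_left, Nat.mod_eq_of_lt (show (j:ℕ) - 1 < n by omega)]

end Aux

section Phi

variable {n : ℕ} [NeZero n] (φm φp : Fin n → ℝ)

lemma phiC_A (hn : 2 ≤ n) (k : ℕ) (h1 : 2 ≤ k) (h2 : k ≤ n) (j : Fin n) :
    phiC n φm φp k j = if (j : ℕ) < k then φm j else φp j := by
  have hj := j.isLt
  simp only [phiC, focal, boxC, if_pos (show k ≤ n + 1 by omega),
    fin_val_sub_one (show 2 ≤ n by omega) j, decide_eq_true_eq]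
  split_ifs <;> first | rfl | (exfalso; omega)

lemma phiC_np1 (hn : 2 ≤ n) (j : Fin n) :
    phiC n φm φp (n + 1) j = if (j : ℕ) = 0 then φp j else φm j := by
  have hj := j.isLt
  simp only [phiC, focal, boxC, if_pos (show n + 1 ≤ n + 1 by omega),
    fin_val_sub_one (show 2 ≤ n by omega) j, decide_eq_true_eq]
  split_ifs <;> first | rfl | (exfalso; omega)

lemma phiC_B (hn : 2 ≤ n) (k : ℕ) (h1 : n + 2 ≤ k) (h2 : k ≤ 2 * n) (j : Fin n) :
    phiC n φm φp k j = if (j : ℕ) + n < k then φp j else φm j := by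
  have hj := j.isLt
  simp only [phiC, focal, boxC, if_neg (show ¬ k ≤ n + 1 by omega),
    fin_val_sub_one (show 2 ≤ n by omega) j, decide_eq_true_eq]
  split_ifs <;> first | rfl | (exfalso; omega)

lemma phiC_last (hn : 2 ≤ n) (j : Fin n) :
    phiC n φm φp (2 * n + 1) j = if (j : ℕ) = 0 then φm j else φp j := by
  have hj := j.isLt
  simp only [phiC, focal, boxC, if_neg (show ¬ 2 * n + 1 ≤ n + 1 by omega),
    fin_val_sub_one (show 2 ≤ n by omega) j, decide_eq_true_eq]
  split_ifs <;> first | rfl | (exfalso; omega)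

end Phi

def InvA (n : ℕ) (φm φp : Fin n → ℝ) (k : ℕ) (y : Fin n → ℝ) : Prop :=
  ∀ j : Fin n, ((j : ℕ) + 1 < k → y j ∈ Set.Ioo (φm j) 0) ∧
    ((j : ℕ) + 1 = k → y j = 0) ∧ (k ≤ (j : ℕ) → y j = φp j)

def InvB (n : ℕ) (φm φp : Fin n → ℝ) (m : ℕ) (y : Fin n → ℝ) : Prop :=
  ∀ j : Fin n, ((j : ℕ) < m → y j ∈ Set.Ioo 0 (φp j)) ∧
    ((j : ℕ) = m → y j = 0) ∧ (m < (j : ℕ) → y j ∈ Set.Ioo (φm j) 0)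

section Steps

variable {n : ℕ} [NeZero n]

lemma stepA (hn : 2 ≤ n) (γ φm φp : Fin n → ℝ) (hγ : ∀ i, 0 < γ i)
    (hφ : ∀ i, φm i < 0 ∧ 0 < φp i)
    (k : ℕ) (hk1 : 1 ≤ k) (hk2 : k ≤ n - 1) (y : Fin n → ℝ)
    (hy : InvA n φm φp k y) :
    InvA n φm φp (k + 1) (transMap n γ φm φp (k + 1) y) := by
  have hkn : k < n := by omega
  have hs : sIdx n (k + 1) = ⟨k, hkn⟩ := by
    apply Fin.ext
    show (k + 1 - 1) % n = k
    rw [Nat.add_sub_cancel, Nat.mod_eq_of_lt hkn]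
  set s : Fin n := ⟨k, hkn⟩ with hsdef
  have hsval : (s : ℕ) = k := rfl
  have hxs : y s = φp s := (hy s).2.2 (le_refl k)
  have hφs : phiC n φm φp (k + 1) s = φm s := by
    rw [phiC_A φm φp hn (k + 1) (by omega) (by omega) s,
      if_pos (Nat.lt_succ_self k)]
  have hbase : phiC n φm φp (k + 1) s / (phiC n φm φp (k + 1) s - y s)
      ∈ Set.Ioo (0:ℝ) 1 := by
    rw [hφs, hxs]; exact base_mem_neg (hφ s).1 (hφ s).2
  intro j
  have hφj := phiC_A φm φp hn (k + 1) (by omega) (by omega) j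
  have ht : transMap n γ φm φp (k + 1) y j =
      phiC n φm φp (k + 1) j + (y j - phiC n φm φp (k + 1) j) *
        (phiC n φm φp (k + 1) s / (phiC n φm φp (k + 1) s - y s)) ^ (γ j / γ s) := by
    simp only [transMap, hs]
  refine ⟨?_, ?_, ?_⟩
  · intro hjk
    rw [ht, hφj, if_pos (by omega)]
    have hx : φm j < y j ∧ y j ≤ 0 := by
      rcases Nat.lt_or_ge ((j : ℕ) + 1) k with h | h
      · exact ⟨((hy j).1 h).1, ((hy j).1 h).2.le⟩
      · rw [(hy j).2.1 (by omega)]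
        exact ⟨(hφ j).1, le_refl 0⟩
    exact move_neg (hφ j).1 hx.1 hx.2 (alpha_mem hbase (div_pos (hγ j) (hγ s)))
  · intro hjk
    have hjs : j = s := Fin.ext (by omega)
    rw [ht, hjs, hφs, hxs, div_self (hγ s).ne', Real.rpow_one]
    exact exit_eq (ne_of_lt (by have := (hφ s).1; have := (hφ s).2; linarith))
  · intro hjk
    rw [ht, hφj, if_neg (by omega), (hy j).2.2 (by omega), sub_self, zero_mul, add_zero]

lemma stepB (hn : 2 ≤ n) (γ φm φp : Fin n → ℝ) (hγ : ∀ i, 0 < γ i)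
    (hφ : ∀ i, φm i < 0 ∧ 0 < φp i) (y : Fin n → ℝ)
    (hy : InvA n φm φp n y) :
    InvB n φm φp 0 (transMap n γ φm φp (n + 1) y) := by
  have h0 : 0 < n := by omega
  have hs : sIdx n (n + 1) = ⟨0, h0⟩ := by
    apply Fin.ext
    show (n + 1 - 1) % n = 0
    rw [Nat.add_sub_cancel, Nat.mod_self]
  set s : Fin n := ⟨0, h0⟩ with hsdef
  have hsval : (s : ℕ) = 0 := rfl
  have hxs : y s ∈ Set.Ioo (φm s) 0 := (hy s).1 (by omega)
  have hφs : phiC n φm φp (n + 1) s = φp s := by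
    rw [phiC_np1 φm φp hn s, if_pos rfl]
  have hbase : phiC n φm φp (n + 1) s / (phiC n φm φp (n + 1) s - y s)
      ∈ Set.Ioo (0:ℝ) 1 := by
    rw [hφs]; exact base_mem_pos (hφ s).2 hxs.2
  intro j
  have hφj := phiC_np1 φm φp hn j
  have ht : transMap n γ φm φp (n + 1) y j =
      phiC n φm φp (n + 1) j + (y j - phiC n φm φp (n + 1) j) *
        (phiC n φm φp (n + 1) s / (phiC n φm φp (n + 1) s - y s)) ^ (γ j / γ s) := by
    simp only [transMap, hs]
  refine ⟨?_, ?_, ?_⟩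
  · intro hjk; exact absurd hjk (by omega)
  · intro hjk
    have hjs : j = s := Fin.ext (by omega)
    rw [ht, hjs, hφs, div_self (hγ s).ne', Real.rpow_one]
    exact exit_eq (ne_of_gt (by have := hxs.2; have := (hφ s).2; linarith))
  · intro hjk
    rw [ht, hφj, if_neg (by omega)]
    have hx : φm j < y j ∧ y j ≤ 0 := by
      rcases Nat.lt_or_ge ((j : ℕ) + 1) n with h | h
      · exact ⟨((hy j).1 h).1, ((hy j).1 h).2.le⟩
      · have : (j : ℕ) + 1 = n := by have := j.isLt; omega
        rw [(hy j).2.1 this]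
        exact ⟨(hφ j).1, le_refl 0⟩
    exact move_neg (hφ j).1 hx.1 hx.2 (alpha_mem hbase (div_pos (hγ j) (hγ s)))

lemma stepC (hn : 2 ≤ n) (γ φm φp : Fin n → ℝ) (hγ : ∀ i, 0 < γ i)
    (hφ : ∀ i, φm i < 0 ∧ 0 < φp i)
    (m : ℕ) (hm : m ≤ n - 2) (y : Fin n → ℝ)
    (hy : InvB n φm φp m y) :
    InvB n φm φp (m + 1) (transMap n γ φm φp (n + 2 + m) y) := by
  have hmn : m + 1 < n := by omega
  have hs : sIdx n (n + 2 + m) = ⟨m + 1, hmn⟩ := by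
    apply Fin.ext
    show (n + 2 + m - 1) % n = m + 1
    have h2 : n + 2 + m - 1 = n + (m + 1) := by omega
    rw [h2, Nat.add_mod_left, Nat.mod_eq_of_lt hmn]
  set s : Fin n := ⟨m + 1, hmn⟩ with hsdef
  have hsval : (s : ℕ) = m + 1 := rfl
  have hxs : y s ∈ Set.Ioo (φm s) 0 := (hy s).2.2 (Nat.lt_succ_self m)
  have hφs : phiC n φm φp (n + 2 + m) s = φp s := by
    rw [phiC_B φm φp hn (n + 2 + m) (by omega) (by omega) s, if_pos (by omega)]
  have hbase : phiC n φm φp (n + 2 + m) s / (phiC n φm φp (n + 2 + m) s - y s)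
      ∈ Set.Ioo (0:ℝ) 1 := by
    rw [hφs]; exact base_mem_pos (hφ s).2 hxs.2
  intro j
  have hφj := phiC_B φm φp hn (n + 2 + m) (by omega) (by omega) j
  have ht : transMap n γ φm φp (n + 2 + m) y j =
      phiC n φm φp (n + 2 + m) j + (y j - phiC n φm φp (n + 2 + m) j) *
        (phiC n φm φp (n + 2 + m) s / (phiC n φm φp (n + 2 + m) s - y s))
          ^ (γ j / γ s) := by
    simp only [transMap, hs]
  refine ⟨?_, ?_, ?_⟩
  · intro hjk
    rw [ht, hφj, if_pos (by have := j.isLt; omega)]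
    have hx : 0 ≤ y j ∧ y j < φp j := by
      rcases Nat.lt_or_ge (j : ℕ) m with h | h
      · exact ⟨((hy j).1 h).1.le, ((hy j).1 h).2⟩
      · rw [(hy j).2.1 (by omega)]
        exact ⟨le_refl 0, (hφ j).2⟩
    exact move_pos (hφ j).2 hx.1 hx.2 (alpha_mem hbase (div_pos (hγ j) (hγ s)))
  · intro hjk
    have hjs : j = s := Fin.ext (by omega)
    rw [ht, hjs, hφs, div_self (hγ s).ne', Real.rpow_one]
    exact exit_eq (ne_of_gt (by have := hxs.2; have := (hφ s).2; linarith))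
  · intro hjk
    rw [ht, hφj, if_neg (by omega)]
    have hx := (hy j).2.2 (by omega)
    exact move_neg (hφ j).1 hx.1 hx.2.le (alpha_mem hbase (div_pos (hγ j) (hγ s)))

lemma stepD (hn : 2 ≤ n) (γ φm φp : Fin n → ℝ) (hγ : ∀ i, 0 < γ i)
    (hφ : ∀ i, φm i < 0 ∧ 0 < φp i) (y : Fin n → ℝ)
    (hy : InvB n φm φp (n - 1) y) :
    ∀ j : Fin n, ((j : ℕ) = 0 → transMap n γ φm φp (2 * n + 1) y j = 0) ∧
      (0 < (j : ℕ) → transMap n γ φm φp (2 * n + 1) y j ∈ Set.Ioo 0 (φp j)) := by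
  have h0 : 0 < n := by omega
  have hs : sIdx n (2 * n + 1) = ⟨0, h0⟩ := by
    apply Fin.ext
    show (2 * n + 1 - 1) % n = 0
    have h2 : 2 * n + 1 - 1 = 2 * n := by omega
    rw [h2, Nat.mul_mod_left]
  set s : Fin n := ⟨0, h0⟩ with hsdef
  have hsval : (s : ℕ) = 0 := rfl
  have hxs : y s ∈ Set.Ioo 0 (φp s) := (hy s).1 (by omega)
  have hφs : phiC n φm φp (2 * n + 1) s = φm s := by
    rw [phiC_last φm φp hn s, if_pos rfl]
  have hbase : phiC n φm φp (2 * n + 1) s / (phiC n φm φp (2 * n + 1) s - y s)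
      ∈ Set.Ioo (0:ℝ) 1 := by
    rw [hφs]; exact base_mem_neg (hφ s).1 hxs.1
  intro j
  have hφj := phiC_last φm φp hn j
  have ht : transMap n γ φm φp (2 * n + 1) y j =
      phiC n φm φp (2 * n + 1) j + (y j - phiC n φm φp (2 * n + 1) j) *
        (phiC n φm φp (2 * n + 1) s / (phiC n φm φp (2 * n + 1) s - y s))
          ^ (γ j / γ s) := by
    simp only [transMap, hs]
  refine ⟨?_, ?_⟩
  · intro hjk
    have hjs : j = s := Fin.ext (by omega)
    rw [ht, hjs, hφs, div_self (hγ s).ne', Real.rpow_one]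
    exact exit_eq (ne_of_lt (by have := hxs.1; have := (hφ s).1; linarith))
  · intro hjk
    rw [ht, hφj, if_neg (by omega)]
    have hx : 0 ≤ y j ∧ y j < φp j := by
      rcases Nat.lt_or_ge (j : ℕ) (n - 1) with h | h
      · exact ⟨((hy j).1 h).1.le, ((hy j).1 h).2⟩
      · have : (j : ℕ) = n - 1 := by have := j.isLt; omega
        rw [(hy j).2.1 this]
        exact ⟨le_refl 0, (hφ j).2⟩
    exact move_pos (hφ j).2 hx.1 hx.2 (alpha_mem hbase (div_pos (hγ j) (hγ s)))

end Steps

noncomputable def stSeq (n : ℕ) [NeZero n] (γ φm φp : Fin n → ℝ) (i : ℕ) : Fin n → ℝ :=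
  (List.range i).foldl (fun y k => transMap n γ φm φp (k + 2) y)
    (fun j' => if j' = sIdx n 1 then 0 else φp j')

section Main

variable {n : ℕ} [NeZero n]

lemma stSeq_succ (γ φm φp : Fin n → ℝ) (i : ℕ) :
    stSeq n γ φm φp (i + 1) = transMap n γ φm φp (i + 2) (stSeq n γ φm φp i) := by
  simp [stSeq, List.range_succ]

lemma sIdx_one_val : ((sIdx n 1 : Fin n) : ℕ) = 0 := Nat.zero_mod n

lemma state_spec (hn : 2 ≤ n) (γ φm φp : Fin n → ℝ) (hγ : ∀ i, 0 < γ i)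
    (hφ : ∀ i, φm i < 0 ∧ 0 < φp i) :
    ∀ i, i ≤ 2 * n →
      (i < n → InvA n φm φp (i + 1) (stSeq n γ φm φp i)) ∧
      (n ≤ i → i < 2 * n → InvB n φm φp (i - n) (stSeq n γ φm φp i)) ∧
      (i = 2 * n → ∀ j : Fin n, ((j : ℕ) = 0 → stSeq n γ φm φp i j = 0) ∧
        (0 < (j : ℕ) → stSeq n γ φm φp i j ∈ Set.Ioo 0 (φp j))) := by
  intro i
  induction i with
  | zero =>
    intro _
    refine ⟨?_, ?_, ?_⟩
    · intro _
      intro j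
      refine ⟨fun h => absurd h (by omega), fun h => ?_, fun h => ?_⟩
      · have hj : j = sIdx n 1 := Fin.ext (by have := @sIdx_one_val n _; omega)
        show (if j = sIdx n 1 then (0:ℝ) else φp j) = 0
        rw [if_pos hj]
      · have hj : j ≠ sIdx n 1 := by
          intro hc
          have := @sIdx_one_val n _
          rw [hc] at h
          omega
        show (if j = sIdx n 1 then (0:ℝ) else φp j) = φp j
        rw [if_neg hj]
    · intro h _; exact absurd h (by omega)
    · intro h; exact absurd h (by omega)
  | succ i ih =>
    intro hi1
    have IH := ih (by omega)
    refine ⟨?_, ?_, ?_⟩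
    · intro h
      rw [stSeq_succ]
      exact stepA hn γ φm φp hγ hφ (i + 1) (by omega) (by omega) _ (IH.1 (by omega))
    · intro h1 h2
      rcases Nat.eq_or_lt_of_le h1 with he | hlt
      · rw [stSeq_succ, show i + 1 - n = 0 by omega, show i + 2 = n + 1 by omega]
        have hA : InvA n φm φp n (stSeq n γ φm φp i) := by
          have := IH.1 (by omega)
          rwa [show i + 1 = n by omega] at this
        exact stepB hn γ φm φp hγ hφ _ hA
      · have hni : n ≤ i := by omega
        rw [stSeq_succ, show i + 2 = n + 2 + (i - n) by omega,
          show i + 1 - n = (i - n) + 1 by omega]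
        exact stepC hn γ φm φp hγ hφ (i - n) (by omega) _ (IH.2.1 hni (by omega))
    · intro h
      rw [stSeq_succ, show i + 2 = 2 * n + 1 by omega]
      have hB : InvB n φm φp (n - 1) (stSeq n γ φm φp i) := by
        have := IH.2.1 (by omega) (by omega)
        rwa [show i - n = n - 1 by omega] at this
      exact stepD hn γ φm φp hγ hφ _ hB

end Main


/-- **The Poincaré map pushes the upper corner of `Z^1` strictly down: `Tp < p`.**
Let `p` be the upper corner of the zone `Z^1`, i.e. (in the embedding of `Z^1` in the
hyperplane `{x_{s_1} = 0}` of `ℝ^n`) the point with `p_{s_1} = 0` and `p_j = φ_j^+` for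
`j ≠ s_1`.  Then `(Tp)_j < p_j` for every coordinate `j ≠ s_1` of the wall. -/
theorem poincare_map_upper_corner_decreases
    (n : ℕ) [NeZero n] (hn : 2 ≤ n)
    (γ φm φp : Fin n → ℝ) (hγ : ∀ i, 0 < γ i)
    (hφ : ∀ i, φm i < 0 ∧ 0 < φp i) :
    ∀ j : Fin n, j ≠ sIdx n 1 →
      poincare n γ φm φp (fun j' => if j' = sIdx n 1 then 0 else φp j') j < φp j := by
  intro j hj
  have h0 : ((sIdx n 1 : Fin n) : ℕ) = 0 := sIdx_one_val
  have hjv : 0 < (j : ℕ) := by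
    rcases Nat.eq_zero_or_pos (j : ℕ) with h | h
    · exact absurd (Fin.ext (by omega) : j = sIdx n 1) hj
    · exact h
  have hs := (state_spec hn γ φm φp hγ hφ (2 * n) (le_refl _)).2.2 rfl j
  have heq : poincare n γ φm φp (fun j' => if j' = sIdx n 1 then 0 else φp j')
      = stSeq n γ φm φp (2 * n) := rfl
  rw [heq]
  exact (hs.2 hjv).2
end

section
/- Suppose n ≥ 3. The Poincaré map T : Z^1 → Z^1 is C¹ on Z^1, and for every x in the interior of Z^1 (i.e., 0 < x < p coordinatewise, where p = (φ_2^+, …, φ_n^+)), the Jacobian matrix DT(x) has all entries strictly positive; that is, T satisfies condition (M). -/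
open Filter Topology Set

namespace CondM

variable {n : ℕ} [NeZero n]

/-- zero coordinate of zone `Z^{m+1}` reached after `m` steps. -/
def zC (n : ℕ) [NeZero n] (m : ℕ) : Fin n :=
  ⟨m % n, Nat.mod_lt _ (Nat.pos_of_ne_zero (NeZero.ne n))⟩

/-- `sideC n m j` : after `m` steps, coordinate `j` lies on the side `[0, φp j]`. -/
def sideC (n : ℕ) (m : ℕ) (j : Fin n) : Prop :=
  if m % (2*n) < n then m % n < (j:ℕ) else (j:ℕ) < m % n

instance (n m : ℕ) (j : Fin n) : Decidable (sideC n m j) := by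
  unfold sideC; infer_instance

noncomputable def sg (n m : ℕ) (j : Fin n) : ℝ := if sideC n m j then 1 else -1

lemma sg_mul_self (m : ℕ) (j : Fin n) : sg n m j * sg n m j = 1 := by
  unfold sg; split_ifs <;> norm_num

lemma val_one' (hn : 2 ≤ n) : ((1 : Fin n) : ℕ) = 1 := by
  rw [Fin.val_one']; exact Nat.mod_eq_of_lt (by omega)

lemma coe_sub_one (hn : 2 ≤ n) (j : Fin n) :
    ((j - 1 : Fin n) : ℕ) = if (j : ℕ) = 0 then n - 1 else (j : ℕ) - 1 := by
  have hj := j.isLt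
  rcases Nat.eq_zero_or_pos (j : ℕ) with h | h
  · rw [if_pos h, Fin.sub_def]
    show (n - ((1 : Fin n) : ℕ) + (j:ℕ)) % n = n - 1
    rw [val_one' hn, h, Nat.add_zero, Nat.mod_eq_of_lt (by omega)]
  · rw [if_neg (by omega), Fin.sub_def]
    show (n - ((1 : Fin n) : ℕ) + (j:ℕ)) % n = (j:ℕ) - 1
    rw [val_one' hn, Nat.mod_eq_sub_mod (by omega)]
    have h2 : n - 1 + (j:ℕ) - n = (j:ℕ) - 1 := by omega
    rw [h2, Nat.mod_eq_of_lt (by omega)]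

lemma phiC_eval (hn : 2 ≤ n) (φm φp : Fin n → ℝ) (k : ℕ) (j : Fin n) :
    phiC n φm φp k j =
      if (j : ℕ) = 0 then
        (if (if k ≤ n+1 then k ≤ n else 2*n < k) then φm j else φp j)
      else
        (if (if k ≤ n+1 then k ≤ (j:ℕ) else (j:ℕ) < k - n) then φp j else φm j) := by
  have hjlt := j.isLt
  rcases Nat.eq_zero_or_pos (j : ℕ) with h0 | h0
  · have hc : ((j - 1 : Fin n) : ℕ) = n - 1 := by rw [coe_sub_one hn, if_pos h0]
    unfold phiC focal boxC
    simp only [hc, Bool.ite_eq_true_distrib, decide_eq_true_eq]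
    split_ifs <;> first | rfl | (exfalso; omega)
  · have hc : ((j - 1 : Fin n) : ℕ) = (j:ℕ) - 1 := by
      rw [coe_sub_one hn, if_neg (by omega)]
    unfold phiC focal boxC
    simp only [hc, Bool.ite_eq_true_distrib, decide_eq_true_eq]
    split_ifs <;> first | rfl | (exfalso; omega)

lemma zC_val (m : ℕ) : ((zC n m : Fin n) : ℕ) = m % n := rfl

section modfacts
variable {m : ℕ}

lemma mod_fact1 (hn : 2 ≤ n) (hm : m < 2*n) :
    (m < n ∧ m % n = m) ∨ (n ≤ m ∧ m % n = m - n) := by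
  rcases Nat.lt_or_ge m n with h | h
  · exact Or.inl ⟨h, Nat.mod_eq_of_lt h⟩
  · exact Or.inr ⟨h, by rw [Nat.mod_eq_sub_mod h, Nat.mod_eq_of_lt (by omega)]⟩

lemma mod_fact2 (hn : 2 ≤ n) (hm : m ≤ 2*n) :
    (m < 2*n ∧ m % (2*n) = m) ∨ (m = 2*n ∧ m % (2*n) = 0) := by
  rcases Nat.lt_or_ge m (2*n) with h | h
  · exact Or.inl ⟨h, Nat.mod_eq_of_lt h⟩
  · have hm2 : m = 2*n := by omega
    exact Or.inr ⟨hm2, by rw [hm2, Nat.mod_self]⟩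

lemma mod_fact3 (hn : 2 ≤ n) (hm : m ≤ 2*n) :
    (m < n ∧ m % n = m) ∨ (n ≤ m ∧ m < 2*n ∧ m % n = m - n) ∨ (m = 2*n ∧ m % n = 0) := by
  rcases Nat.lt_or_ge m n with h | h
  · exact Or.inl ⟨h, Nat.mod_eq_of_lt h⟩
  rcases Nat.lt_or_ge m (2*n) with h2 | h2
  · exact Or.inr (Or.inl ⟨h, h2, by rw [Nat.mod_eq_sub_mod h, Nat.mod_eq_of_lt (by omega)]⟩)
  · have hm2 : m = 2*n := by omega
    exact Or.inr (Or.inr ⟨hm2, by rw [hm2, Nat.mul_mod_left]⟩)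

end modfacts

lemma zC_ne_succ (hn : 2 ≤ n) {m : ℕ} (hm : m < 2*n) : zC n m ≠ zC n (m+1) := by
  intro h
  have hv := congrArg Fin.val h
  rw [zC_val, zC_val] at hv
  rcases mod_fact1 hn hm with ⟨h1a, h1⟩ | ⟨h1a, h1⟩ <;>
    rcases mod_fact3 hn (by omega : m+1 ≤ 2*n) with ⟨h2a, h2⟩ | ⟨h2a, h2b, h2⟩ | ⟨h2a, h2⟩ <;>
    omega

lemma sIdx_eq_zC (m : ℕ) : sIdx n (m+2) = zC n (m+1) := rfl

lemma sIdx_one_eq : sIdx n 1 = zC n 0 := rfl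

/-- L3: the exit focal coordinate is opposite to the current side. -/
lemma phiC_exit (hn : 2 ≤ n) (φm φp : Fin n → ℝ) {m : ℕ} (hm : m < 2*n) :
    phiC n φm φp (m+2) (zC n (m+1)) =
      if sideC n m (zC n (m+1)) then φm (zC n (m+1)) else φp (zC n (m+1))  := by
  rw [phiC_eval hn]
  simp only [sideC, zC_val]
  have e0 : m % (2*n) = m := Nat.mod_eq_of_lt hm
  rcases mod_fact1 hn hm with ⟨h1a, h1⟩ | ⟨h1a, h1⟩ <;>
    rcases mod_fact3 hn (by omega : m+1 ≤ 2*n) with ⟨h2a, h2⟩ | ⟨h2a, h2b, h2⟩ | ⟨h2a, h2⟩ <;>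
    simp only [h1, h2, e0] <;>
    (repeat' split) <;> first | rfl | (exfalso; omega) | contradiction

/-- L4: for `j` different from the exit coordinate, the focal coordinate is the
endpoint of the side of `j` in the next zone. -/
lemma phiC_other (hn : 2 ≤ n) (φm φp : Fin n → ℝ) {m : ℕ} (hm : m < 2*n) {j : Fin n}
    (hj : j ≠ zC n (m+1)) :
    phiC n φm φp (m+2) j = if sideC n (m+1) j then φp j else φm j := by
  have hjv : (j : ℕ) ≠ (m+1) % n := fun h => hj (Fin.ext h)
  have hjlt := j.isLt
  rw [phiC_eval hn]
  simp only [sideC, zC_val]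
  rcases mod_fact3 hn (by omega : m+1 ≤ 2*n) with ⟨h2a, h2⟩ | ⟨h2a, h2b, h2⟩ | ⟨h2a, h2⟩ <;>
    rcases mod_fact2 hn (by omega : m+1 ≤ 2*n) with ⟨h3a, h3⟩ | ⟨h3a, h3⟩ <;>
    split_ifs <;> first | rfl | (exfalso; omega)

/-- L5: away from the old and new exit coordinates, the side is unchanged. -/
lemma sideC_succ (hn : 2 ≤ n) {m : ℕ} (hm : m < 2*n) {j : Fin n}
    (hj1 : j ≠ zC n m) (hj2 : j ≠ zC n (m+1)) :
    sideC n (m+1) j ↔ sideC n m j := by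
  have hjv1 : (j : ℕ) ≠ m % n := fun h => hj1 (Fin.ext h)
  have hjv2 : (j : ℕ) ≠ (m+1) % n := fun h => hj2 (Fin.ext h)
  have hjlt := j.isLt
  have e0 : m % (2*n) = m := Nat.mod_eq_of_lt hm
  unfold sideC
  rcases mod_fact1 hn hm with ⟨h1a, h1⟩ | ⟨h1a, h1⟩ <;>
    rcases mod_fact3 hn (by omega : m+1 ≤ 2*n) with ⟨h2a, h2⟩ | ⟨h2a, h2b, h2⟩ | ⟨h2a, h2⟩ <;>
    rcases mod_fact2 hn (by omega : m+1 ≤ 2*n) with ⟨h3a, h3⟩ | ⟨h3a, h3⟩ <;>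
    split_ifs <;> first | (exact Iff.rfl) | omega

lemma sideC_zero (j : Fin n) (hj : j ≠ zC n 0) : sideC n 0 j := by
  have h : (j:ℕ) ≠ 0 % n := fun h => hj (Fin.ext h)
  have := j.isLt
  have hn : 0 < n := Nat.pos_of_ne_zero (NeZero.ne n)
  unfold sideC
  rw [Nat.zero_mod] at h
  rw [Nat.zero_mod, Nat.zero_mod, if_pos (by omega)]
  omega

lemma sideC_final (hn : 2 ≤ n) (j : Fin n) (hj : j ≠ zC n 0) : sideC n (2*n) j := by
  have h1 : (2*n) % n = 0 := Nat.mul_mod_left 2 n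
  have h2 : (2*n) % (2*n) = 0 := Nat.mod_self _
  have h : (j:ℕ) ≠ 0 % n := fun h => hj (Fin.ext h)
  rw [Nat.zero_mod] at h
  unfold sideC
  rw [h1, h2, if_pos (by omega)]
  omega

lemma zC_zero_val : ((zC n 0 : Fin n) : ℕ) = 0 := by rw [zC_val, Nat.zero_mod]

lemma zC_final (hn : 2 ≤ n) : zC n (2*n) = zC n 0 := by
  apply Fin.ext
  rw [zC_val, zC_val, Nat.mul_mod_left, Nat.zero_mod]

section generic

variable (φ c : Fin n → ℝ) (s : Fin n)

/-- generic local transition map with focal point `φ`, exponents `c`, exit coordinate `s`. -/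
noncomputable def sMap (x : Fin n → ℝ) (j : Fin n) : ℝ :=
  φ j + (x j - φ j) * (φ s / (φ s - x s)) ^ (c j)

noncomputable def sA (y : Fin n → ℝ) (j : Fin n) : ℝ := (φ s / (φ s - y s)) ^ (c j)

noncomputable def sB (y : Fin n → ℝ) (j : Fin n) : ℝ :=
  (y j - φ j) * (c j * (φ s / (φ s - y s)) ^ (c j) / (φ s - y s))

noncomputable def sD (y : Fin n → ℝ) : (Fin n → ℝ) →L[ℝ] (Fin n → ℝ) :=
  ContinuousLinearMap.pi fun j =>
    sA φ c s y j • ContinuousLinearMap.proj j + sB φ c s y j • ContinuousLinearMap.proj s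

lemma sD_apply (y v : Fin n → ℝ) (j : Fin n) :
    sD φ c s y v j = sA φ c s y j * v j + sB φ c s y j * v s := by
  simp [sD, ContinuousLinearMap.pi_apply, ContinuousLinearMap.add_apply,
    ContinuousLinearMap.smul_apply, ContinuousLinearMap.proj_apply, smul_eq_mul]

variable {φ c s}

lemma den_ne {y : Fin n → ℝ} (hu : 0 < φ s / (φ s - y s)) : φ s - y s ≠ 0 := by
  intro h
  rw [h, div_zero] at hu
  exact lt_irrefl _ hu

lemma sMap_hasFDerivAt (y : Fin n → ℝ) (hu : 0 < φ s / (φ s - y s)) :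
    HasFDerivAt (sMap φ c s) (sD φ c s y) y := by
  have hd : φ s - y s ≠ 0 := den_ne hu
  have hφs : φ s ≠ 0 := fun h' => by rw [h', zero_div] at hu; exact lt_irrefl _ hu
  rw [hasFDerivAt_pi']
  intro j
  rw [sD, ContinuousLinearMap.proj_pi]
  have h0 : HasDerivAt (fun t : ℝ => φ s - t) (-1) (y s) := by
    simpa using (hasDerivAt_id' (y s)).const_sub (φ s)
  have h1 : HasDerivAt (fun t : ℝ => φ s / (φ s - t)) (φ s / (φ s - y s) ^ 2) (y s) := by
    have h := (hasDerivAt_const (y s) (φ s)).fun_div h0 hd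
    exact h.congr_deriv (by ring)
  have h2 : HasDerivAt (fun t : ℝ => (φ s / (φ s - t)) ^ c j)
      (c j * (φ s / (φ s - y s)) ^ c j / (φ s - y s)) (y s) := by
    have h := h1.rpow_const (p := c j) (Or.inl (ne_of_gt hu))
    have e : φ s / (φ s - y s) ^ 2 * c j * (φ s / (φ s - y s)) ^ (c j - 1)
        = c j * (φ s / (φ s - y s)) ^ c j / (φ s - y s) := by
      rw [Real.rpow_sub hu, Real.rpow_one]
      generalize (φ s / (φ s - y s)) ^ c j = X
      field_simp
    exact e ▸ h
  have hps : HasFDerivAt (fun x : Fin n → ℝ => x s)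
      (ContinuousLinearMap.proj (R := ℝ) (φ := fun _ : Fin n => ℝ) s) y :=
    (ContinuousLinearMap.proj (R := ℝ) (φ := fun _ : Fin n => ℝ) s).hasFDerivAt
  have h3 : HasFDerivAt (fun x : Fin n → ℝ => (φ s / (φ s - x s)) ^ c j)
      ((c j * (φ s / (φ s - y s)) ^ c j / (φ s - y s)) •
        ContinuousLinearMap.proj (R := ℝ) (φ := fun _ : Fin n => ℝ) s) y :=
    by have := h2.comp_hasFDerivAt y hps; exact this
  have h4 : HasFDerivAt (fun x : Fin n → ℝ => x j - φ j)
      (ContinuousLinearMap.proj (R := ℝ) (φ := fun _ : Fin n => ℝ) j) y :=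
    ((ContinuousLinearMap.proj (R := ℝ) (φ := fun _ : Fin n => ℝ) j).hasFDerivAt
      (x := y)).sub_const (φ j)
  have h5 : HasFDerivAt (fun x : Fin n → ℝ => φ j + (x j - φ j) * (φ s / (φ s - x s)) ^ c j)
      ((y j - φ j) • ((c j * (φ s / (φ s - y s)) ^ c j / (φ s - y s)) •
          ContinuousLinearMap.proj (R := ℝ) (φ := fun _ : Fin n => ℝ) s)
        + ((φ s / (φ s - y s)) ^ c j) •
          ContinuousLinearMap.proj (R := ℝ) (φ := fun _ : Fin n => ℝ) j) y :=
    (h4.mul h3).const_add (φ j)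
  have heq : (sA φ c s y j • ContinuousLinearMap.proj j + sB φ c s y j • ContinuousLinearMap.proj s
      : (Fin n → ℝ) →L[ℝ] ℝ)
      = (y j - φ j) • ((c j * (φ s / (φ s - y s)) ^ c j / (φ s - y s)) •
          ContinuousLinearMap.proj (R := ℝ) (φ := fun _ : Fin n => ℝ) s)
        + ((φ s / (φ s - y s)) ^ c j) •
          ContinuousLinearMap.proj (R := ℝ) (φ := fun _ : Fin n => ℝ) j := by
    ext v
    simp only [sA, sB, ContinuousLinearMap.add_apply, ContinuousLinearMap.smul_apply,
      ContinuousLinearMap.proj_apply, smul_eq_mul]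
    ring
  rw [heq]
  exact h5

lemma sMap_contDiffAt (y : Fin n → ℝ) (hu : 0 < φ s / (φ s - y s)) :
    ContDiffAt ℝ 1 (sMap φ c s) y := by
  have hd : φ s - y s ≠ 0 := den_ne hu
  rw [contDiffAt_pi]
  intro j
  have hproj : ∀ i : Fin n, ContDiffAt ℝ 1 (fun x : Fin n → ℝ => x i) y := fun i =>
    (ContinuousLinearMap.proj (R := ℝ) (φ := fun _ : Fin n => ℝ) i).contDiff.contDiffAt
  have hinner : ContDiffAt ℝ 1 (fun x : Fin n → ℝ => φ s / (φ s - x s)) y :=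
    contDiffAt_const.div (contDiffAt_const.sub (hproj s)) hd
  have hr : ContDiffAt ℝ 1 (fun t : ℝ => t ^ c j) (φ s / (φ s - y s)) :=
    Real.contDiffAt_rpow_const_of_ne (ne_of_gt hu)
  exact contDiffAt_const.add (((hproj j).sub contDiffAt_const).mul (by have := hr.comp y hinner; exact this))

end generic

section main

variable (γ φm φp : Fin n → ℝ)

/-- partial composition of the first `m` transition maps. -/
noncomputable def G (m : ℕ) (x : Fin n → ℝ) : Fin n → ℝ :=
  (List.range m).foldl (fun y k => transMap n γ φm φp (k + 2) y) x

lemma G_succ (m : ℕ) (x : Fin n → ℝ) :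
    G γ φm φp (m+1) x = transMap n γ φm φp (m+2) (G γ φm φp m x) := by
  unfold G
  rw [List.range_succ, List.foldl_append, List.foldl_cons, List.foldl_nil]

/-- closed zone invariant after `m` steps. -/
def Qbar (m : ℕ) (y : Fin n → ℝ) : Prop :=
  y (zC n m) = 0 ∧ ∀ j : Fin n,
    if sideC n m j then y j ∈ Icc 0 (φp j) else y j ∈ Icc (φm j) 0

/-- open (interior) zone invariant after `m` steps. -/
def Qint (m : ℕ) (y : Fin n → ℝ) : Prop :=
  y (zC n m) = 0 ∧ ∀ j : Fin n, j ≠ zC n m →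
    if sideC n m j then y j ∈ Ioo 0 (φp j) else y j ∈ Ioo (φm j) 0

variable {γ φm φp}

lemma Qint.qbar (hφ : ∀ i, φm i < 0 ∧ 0 < φp i) {m : ℕ} {y : Fin n → ℝ}
    (h : Qint φm φp m y) : Qbar φm φp m y := by
  refine ⟨h.1, fun j => ?_⟩
  by_cases hj : j = zC n m
  · subst hj
    rw [h.1]
    split_ifs
    · exact ⟨le_rfl, (hφ _).2.le⟩
    · exact ⟨(hφ _).1.le, le_rfl⟩
  · have h2 := h.2 j hj
    split_ifs at h2 ⊢
    · exact Ioo_subset_Icc_self h2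
    · exact Ioo_subset_Icc_self h2

lemma u_facts (hn : 2 ≤ n) (hφ : ∀ i, φm i < 0 ∧ 0 < φp i) {m : ℕ} (hm : m < 2*n)
    {y : Fin n → ℝ} (h : Qbar φm φp m y) :
    0 < phiC n φm φp (m+2) (zC n (m+1)) /
        (phiC n φm φp (m+2) (zC n (m+1)) - y (zC n (m+1))) ∧
    phiC n φm φp (m+2) (zC n (m+1)) /
        (phiC n φm φp (m+2) (zC n (m+1)) - y (zC n (m+1))) ≤ 1 := by
  have hφe := phiC_exit (φm := φm) (φp := φp) hn hm
  have hyb := h.2 (zC n (m+1))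
  by_cases hside : sideC n m (zC n (m+1))
  · rw [if_pos hside] at hφe hyb
    rw [hφe]
    have h1 : φm (zC n (m+1)) - y (zC n (m+1)) < 0 := by
      have := (hφ (zC n (m+1))).1
      have := hyb.1
      linarith
    refine ⟨div_pos_of_neg_of_neg (hφ _).1 h1, ?_⟩
    have h2 : 1 - φm (zC n (m+1)) / (φm (zC n (m+1)) - y (zC n (m+1)))
        = (- y (zC n (m+1))) / (φm (zC n (m+1)) - y (zC n (m+1))) := by
      field_simp [h1.ne]
      ring
    have h3 : 0 ≤ (- y (zC n (m+1))) / (φm (zC n (m+1)) - y (zC n (m+1))) :=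
      div_nonneg_of_nonpos (by linarith [hyb.1]) h1.le
    linarith
  · rw [if_neg hside] at hφe hyb
    rw [hφe]
    have h1 : 0 < φp (zC n (m+1)) - y (zC n (m+1)) := by
      have := (hφ (zC n (m+1))).2
      have := hyb.2
      linarith
    refine ⟨div_pos (hφ _).2 h1, ?_⟩
    have h2 : 1 - φp (zC n (m+1)) / (φp (zC n (m+1)) - y (zC n (m+1)))
        = (- y (zC n (m+1))) / (φp (zC n (m+1)) - y (zC n (m+1))) := by
      field_simp [h1.ne']
      ring
    have h3 : 0 ≤ (- y (zC n (m+1))) / (φp (zC n (m+1)) - y (zC n (m+1))) :=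
      div_nonneg (by linarith [hyb.2]) h1.le
    linarith

lemma u_lt_one (hn : 2 ≤ n) (hφ : ∀ i, φm i < 0 ∧ 0 < φp i) {m : ℕ} (hm : m < 2*n)
    {y : Fin n → ℝ} (h : Qint φm φp m y) :
    phiC n φm φp (m+2) (zC n (m+1)) /
        (phiC n φm φp (m+2) (zC n (m+1)) - y (zC n (m+1))) < 1 := by
  have hφe := phiC_exit (φm := φm) (φp := φp) hn hm
  have hyb := h.2 (zC n (m+1)) (zC_ne_succ hn hm).symm
  by_cases hside : sideC n m (zC n (m+1))
  · rw [if_pos hside] at hφe hyb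
    rw [hφe]
    have h1 : φm (zC n (m+1)) - y (zC n (m+1)) < 0 := by
      have := (hφ (zC n (m+1))).1
      have := hyb.1
      linarith
    have h2 : 1 - φm (zC n (m+1)) / (φm (zC n (m+1)) - y (zC n (m+1)))
        = (- y (zC n (m+1))) / (φm (zC n (m+1)) - y (zC n (m+1))) := by
      field_simp [h1.ne]
      ring
    have h3 : 0 < (- y (zC n (m+1))) / (φm (zC n (m+1)) - y (zC n (m+1))) :=
      div_pos_of_neg_of_neg (by linarith [hyb.1]) h1
    linarith
  · rw [if_neg hside] at hφe hyb
    rw [hφe]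
    have h1 : 0 < φp (zC n (m+1)) - y (zC n (m+1)) := by
      have := (hφ (zC n (m+1))).2
      have := hyb.2
      linarith
    have h2 : 1 - φp (zC n (m+1)) / (φp (zC n (m+1)) - y (zC n (m+1)))
        = (- y (zC n (m+1))) / (φp (zC n (m+1)) - y (zC n (m+1))) := by
      field_simp [h1.ne']
      ring
    have h3 : 0 < (- y (zC n (m+1))) / (φp (zC n (m+1)) - y (zC n (m+1))) :=
      div_pos (by linarith [hyb.2]) h1
    linarith

lemma transMap_component (k : ℕ) (y : Fin n → ℝ) (j : Fin n) :
    transMap n γ φm φp k y j = phiC n φm φp k j + (y j - phiC n φm φp k j) *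
      (phiC n φm φp k (sIdx n k) / (phiC n φm φp k (sIdx n k) - y (sIdx n k)))
        ^ (γ j / γ (sIdx n k)) := rfl

lemma transMap_exit (hγ : ∀ i, 0 < γ i) {m : ℕ} {y : Fin n → ℝ}
    (hd : phiC n φm φp (m+2) (zC n (m+1)) - y (zC n (m+1)) ≠ 0) :
    transMap n γ φm φp (m+2) y (zC n (m+1)) = 0 := by
  rw [transMap_component, sIdx_eq_zC, div_self (hγ (zC n (m+1))).ne', Real.rpow_one]
  field_simp
  ring

lemma step_bar (hn : 2 ≤ n) (hγ : ∀ i, 0 < γ i) (hφ : ∀ i, φm i < 0 ∧ 0 < φp i)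
    {m : ℕ} (hm : m < 2*n) {y : Fin n → ℝ} (h : Qbar φm φp m y) :
    Qbar φm φp (m+1) (transMap n γ φm φp (m+2) y) := by
  obtain ⟨hu, hu1⟩ := u_facts hn hφ hm h
  have hd := den_ne hu
  have hzero : transMap n γ φm φp (m+2) y (zC n (m+1)) = 0 := transMap_exit hγ hd
  refine ⟨hzero, fun j => ?_⟩
  by_cases hjs : j = zC n (m+1)
  · subst hjs
    rw [hzero]
    split_ifs
    · exact ⟨le_rfl, (hφ _).2.le⟩
    · exact ⟨(hφ _).1.le, le_rfl⟩
  · have hφj := phiC_other (φm := φm) (φp := φp) hn hm hjs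
    have hyj : if sideC n (m+1) j then y j ∈ Icc 0 (φp j) else y j ∈ Icc (φm j) 0 := by
      by_cases hjr : j = zC n m
      · subst hjr
        rw [h.1]
        split_ifs
        · exact ⟨le_rfl, (hφ _).2.le⟩
        · exact ⟨(hφ _).1.le, le_rfl⟩
      · have h2 := h.2 j
        have hiff := sideC_succ hn hm hjr hjs
        by_cases hside : sideC n (m+1) j
        · rw [if_pos hside]
          rw [if_pos (hiff.mp hside)] at h2
          exact h2
        · rw [if_neg hside]
          rw [if_neg (fun hh => hside (hiff.mpr hh))] at h2
          exact h2
    have ht0 : 0 < (phiC n φm φp (m+2) (zC n (m+1)) /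
        (phiC n φm φp (m+2) (zC n (m+1)) - y (zC n (m+1)))) ^ (γ j / γ (zC n (m+1))) :=
      Real.rpow_pos_of_pos hu _
    have ht1 : (phiC n φm φp (m+2) (zC n (m+1)) /
        (phiC n φm φp (m+2) (zC n (m+1)) - y (zC n (m+1)))) ^ (γ j / γ (zC n (m+1))) ≤ 1 :=
      Real.rpow_le_one hu.le hu1 (div_pos (hγ j) (hγ (zC n (m+1)))).le
    rw [transMap_component, sIdx_eq_zC]
    by_cases hside : sideC n (m+1) j
    · rw [if_pos hside] at hyj ⊢
      rw [if_pos hside] at hφj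
      rw [hφj]
      obtain ⟨hy1, hy2⟩ := hyj
      constructor
      · nlinarith [(hφ j).2]
      · nlinarith
    · rw [if_neg hside] at hyj ⊢
      rw [if_neg hside] at hφj
      rw [hφj]
      obtain ⟨hy1, hy2⟩ := hyj
      constructor
      · nlinarith
      · nlinarith [(hφ j).1]

lemma step_int (hn : 2 ≤ n) (hγ : ∀ i, 0 < γ i) (hφ : ∀ i, φm i < 0 ∧ 0 < φp i)
    {m : ℕ} (hm : m < 2*n) {y : Fin n → ℝ} (h : Qint φm φp m y) :
    Qint φm φp (m+1) (transMap n γ φm φp (m+2) y) := by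
  obtain ⟨hu, _⟩ := u_facts hn hφ hm (h.qbar hφ)
  have hu1 := u_lt_one hn hφ hm h
  have hd := den_ne hu
  have hzero : transMap n γ φm φp (m+2) y (zC n (m+1)) = 0 := transMap_exit hγ hd
  refine ⟨hzero, fun j hjs => ?_⟩
  have hφj := phiC_other (φm := φm) (φp := φp) hn hm hjs
  have hyj : if sideC n (m+1) j then (0 ≤ y j ∧ y j < φp j) else (φm j < y j ∧ y j ≤ 0) := by
    by_cases hjr : j = zC n m
    · subst hjr
      rw [h.1]
      split_ifs
      · exact ⟨le_rfl, (hφ _).2⟩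
      · exact ⟨(hφ _).1, le_rfl⟩
    · have h2 := h.2 j hjr
      have hiff := sideC_succ hn hm hjr hjs
      by_cases hside : sideC n (m+1) j
      · rw [if_pos hside]
        rw [if_pos (hiff.mp hside)] at h2
        exact ⟨h2.1.le, h2.2⟩
      · rw [if_neg hside]
        rw [if_neg (fun hh => hside (hiff.mpr hh))] at h2
        exact ⟨h2.1, h2.2.le⟩
  have ht0 : 0 < (phiC n φm φp (m+2) (zC n (m+1)) /
      (phiC n φm φp (m+2) (zC n (m+1)) - y (zC n (m+1)))) ^ (γ j / γ (zC n (m+1))) :=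
    Real.rpow_pos_of_pos hu _
  have ht1 : (phiC n φm φp (m+2) (zC n (m+1)) /
      (phiC n φm φp (m+2) (zC n (m+1)) - y (zC n (m+1)))) ^ (γ j / γ (zC n (m+1))) < 1 :=
    Real.rpow_lt_one hu.le hu1 (div_pos (hγ j) (hγ (zC n (m+1))))
  rw [transMap_component, sIdx_eq_zC]
  by_cases hside : sideC n (m+1) j
  · rw [if_pos hside] at hyj ⊢
    rw [if_pos hside] at hφj
    rw [hφj]
    obtain ⟨hy1, hy2⟩ := hyj
    constructor
    · nlinarith [(hφ j).2]
    · nlinarith [(hφ j).2]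
  · rw [if_neg hside] at hyj ⊢
    rw [if_neg hside] at hφj
    rw [hφj]
    obtain ⟨hy1, hy2⟩ := hyj
    constructor
    · nlinarith [(hφ j).1]
    · nlinarith [(hφ j).1]

lemma step_signs (hn : 2 ≤ n) (hγ : ∀ i, 0 < γ i) (hφ : ∀ i, φm i < 0 ∧ 0 < φp i)
    {m : ℕ} (hm : m < 2*n) {y : Fin n → ℝ} (h : Qint φm φp m y) :
    (∀ j, 0 < sA (phiC n φm φp (m+2)) (fun j => γ j / γ (zC n (m+1))) (zC n (m+1)) y j) ∧
    (∀ j, j ≠ zC n (m+1) →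
      0 < sg n (m+1) j *
          sB (phiC n φm φp (m+2)) (fun j => γ j / γ (zC n (m+1))) (zC n (m+1)) y j *
          sg n m (zC n (m+1))) ∧
    (sA (phiC n φm φp (m+2)) (fun j => γ j / γ (zC n (m+1))) (zC n (m+1)) y (zC n (m+1)) +
     sB (phiC n φm φp (m+2)) (fun j => γ j / γ (zC n (m+1))) (zC n (m+1)) y (zC n (m+1)) = 0) := by
  obtain ⟨hu, hu1⟩ := u_facts hn hφ hm (h.qbar hφ)
  have hd := den_ne hu
  refine ⟨fun j => Real.rpow_pos_of_pos hu _, fun j hjs => ?_, ?_⟩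
  · -- sign of the B entry
    simp only [sB]
    have h3 : 0 < (γ j / γ (zC n (m+1))) * (phiC n φm φp (m+2) (zC n (m+1)) /
        (phiC n φm φp (m+2) (zC n (m+1)) - y (zC n (m+1)))) ^ (γ j / γ (zC n (m+1))) :=
      mul_pos (div_pos (hγ j) (hγ _)) (Real.rpow_pos_of_pos hu _)
    have h2 : sg n m (zC n (m+1)) *
        (phiC n φm φp (m+2) (zC n (m+1)) - y (zC n (m+1))) < 0 := by
      have hφe := phiC_exit (φm := φm) (φp := φp) hn hm
      have hyb := h.2 (zC n (m+1)) (zC_ne_succ hn hm).symm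
      by_cases hside : sideC n m (zC n (m+1))
      · rw [if_pos hside] at hφe hyb
        rw [hφe, sg, if_pos hside, one_mul]
        have := (hφ (zC n (m+1))).1
        have := hyb.1
        linarith
      · rw [if_neg hside] at hφe hyb
        rw [hφe, sg, if_neg hside]
        have := (hφ (zC n (m+1))).2
        have := hyb.2
        nlinarith
    have h1 : sg n (m+1) j * (y j - phiC n φm φp (m+2) j) < 0 := by
      have hφj := phiC_other (φm := φm) (φp := φp) hn hm hjs
      have hyj : if sideC n (m+1) j then y j < φp j else φm j < y j := by
        by_cases hjr : j = zC n m
        · subst hjr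
          rw [h.1]
          split_ifs
          · exact (hφ _).2
          · exact (hφ _).1
        · have h2' := h.2 j hjr
          have hiff := sideC_succ hn hm hjr hjs
          by_cases hside : sideC n (m+1) j
          · rw [if_pos hside]
            rw [if_pos (hiff.mp hside)] at h2'
            exact h2'.2
          · rw [if_neg hside]
            rw [if_neg (fun hh => hside (hiff.mpr hh))] at h2'
            exact h2'.1
      by_cases hside : sideC n (m+1) j
      · rw [if_pos hside] at hφj hyj
        rw [hφj, sg, if_pos hside, one_mul]
        linarith
      · rw [if_neg hside] at hφj hyj
        rw [hφj, sg, if_neg hside]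
        nlinarith
    have hinv : sg n m (zC n (m+1)) *
        (phiC n φm φp (m+2) (zC n (m+1)) - y (zC n (m+1)))⁻¹ < 0 := by
      rcases lt_or_gt_of_ne hd with hdlt | hdgt
      · have hgm : 0 < sg n m (zC n (m+1)) := by nlinarith
        exact mul_neg_of_pos_of_neg hgm (inv_lt_zero.2 hdlt)
      · have hgm : sg n m (zC n (m+1)) < 0 := by nlinarith
        exact mul_neg_of_neg_of_pos hgm (inv_pos.2 hdgt)
    have hpos := mul_pos (mul_pos_of_neg_of_neg h1 hinv) h3
    refine lt_of_lt_of_eq hpos ?_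
    ring
  · simp only [sA, sB]
    rw [div_self (hγ (zC n (m+1))).ne', Real.rpow_one]
    field_simp
    ring

/-- the first half of the theorem: closed invariants and `C¹` smoothness. -/
lemma main_bar (hn : 2 ≤ n) (hγ : ∀ i, 0 < γ i) (hφ : ∀ i, φm i < 0 ∧ 0 < φp i)
    (x : Fin n → ℝ) (hx : Qbar φm φp 0 x) :
    ∀ m, m ≤ 2*n → Qbar φm φp m (G γ φm φp m x) ∧ ContDiffAt ℝ 1 (G γ φm φp m) x := by
  intro m
  induction m with
  | zero => exact fun _ => ⟨hx, contDiffAt_id⟩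
  | succ m ih =>
    intro hm1
    have hm : m < 2*n := by omega
    obtain ⟨hQ, hC⟩ := ih (by omega)
    obtain ⟨hu, _⟩ := u_facts hn hφ hm hQ
    have hsm : ContDiffAt ℝ 1 (transMap n γ φm φp (m+2)) (G γ φm φp m x) :=
      sMap_contDiffAt (φ := phiC n φm φp (m+2)) (c := fun j => γ j / γ (zC n (m+1)))
        (s := zC n (m+1)) (G γ φm φp m x) hu
    have hfun : (fun z => transMap n γ φm φp (m+2) (G γ φm φp m z)) = G γ φm φp (m+1) := by
      funext z
      exact (G_succ γ φm φp m z).symm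
    constructor
    · rw [G_succ]
      exact step_bar hn hγ hφ hm hQ
    · have := hsm.comp x hC
      rwa [show (transMap n γ φm φp (m+2)) ∘ (G γ φm φp m) = G γ φm φp (m+1) from hfun] at this

/-- the main induction: strict invariants, differentiability and sign pattern of
the Jacobian of the partial compositions. -/
lemma main_strict (hn : 2 ≤ n) (hγ : ∀ i, 0 < γ i) (hφ : ∀ i, φm i < 0 ∧ 0 < φp i)
    (x : Fin n → ℝ) (hx : Qint φm φp 0 x) :
    ∀ m, m ≤ 2*n → ∃ M : (Fin n → ℝ) →L[ℝ] (Fin n → ℝ),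
      HasFDerivAt (G γ φm φp m) M x ∧ Qint φm φp m (G γ φm φp m x) ∧
      ∀ k : Fin n, k ≠ zC n 0 →
        (M (Pi.single k 1) (zC n m) = 0 ∧
         ∀ j : Fin n, j ≠ zC n m →
           0 ≤ sg n m j * M (Pi.single k 1) j ∧
           (((k:ℕ) ≤ m ∨ j = k) → 0 < sg n m j * M (Pi.single k 1) j)) := by
  intro m
  induction m with
  | zero =>
    intro _
    refine ⟨ContinuousLinearMap.id ℝ _, hasFDerivAt_id x, hx, fun k hk => ?_⟩
    have hk0 : (k : ℕ) ≠ 0 := by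
      intro h
      exact hk (Fin.ext (by rw [h, zC_zero_val]))
    simp only [ContinuousLinearMap.id_apply]
    constructor
    · exact Pi.single_eq_of_ne (fun h => hk (by rw [← h])) 1
    · intro j hj
      have hsg : sg n 0 j = 1 := by rw [sg, if_pos (sideC_zero j hj)]
      rw [hsg, one_mul, Pi.single_apply]
      constructor
      · split_ifs
        · exact zero_le_one
        · exact le_rfl
      · rintro (hc | hc)
        · omega
        · rw [if_pos hc]
          exact one_pos
  | succ m ih =>
    intro hm1
    have hm : m < 2*n := by omega
    obtain ⟨M, hM, hQ, hInv⟩ := ih (by omega)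
    obtain ⟨hu, _⟩ := u_facts hn hφ hm (hQ.qbar hφ)
    obtain ⟨hA, hB, hAB⟩ := step_signs hn hγ hφ hm hQ
    set y := G γ φm φp m x with hy
    set Φ := phiC n φm φp (m+2) with hΦ
    set cc : Fin n → ℝ := fun j => γ j / γ (zC n (m+1)) with hcc
    set s := zC n (m+1) with hs
    set r := zC n m with hr
    have hsr : s ≠ r := (zC_ne_succ hn hm).symm
    have hF : HasFDerivAt (transMap n γ φm φp (m+2)) (sD Φ cc s y) y :=
      sMap_hasFDerivAt (φ := Φ) (c := cc) (s := s) y hu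
    refine ⟨(sD Φ cc s y).comp M, ?_, ?_, ?_⟩
    · have hcomp := hF.comp x hM
      have hfun : (transMap n γ φm φp (m+2)) ∘ (G γ φm φp m) = G γ φm φp (m+1) := by
        funext z
        exact (G_succ γ φm φp m z).symm
      rwa [hfun] at hcomp
    · rw [G_succ]
      exact step_int hn hγ hφ hm hQ
    · intro k hk
      obtain ⟨hvz, hInvk⟩ := hInv k hk
      set v : Fin n → ℝ := M (Pi.single k 1) with hv
      have happ : ∀ j, ((sD Φ cc s y).comp M) (Pi.single k 1) j
          = sA Φ cc s y j * v j + sB Φ cc s y j * v s := by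
        intro j
        rw [ContinuousLinearMap.comp_apply]
        exact sD_apply Φ cc s y v j
      have hvs_nonneg : 0 ≤ sg n m s * v s := (hInvk s hsr).1
      have hss : sg n m s * sg n m s = 1 := sg_mul_self m s
      constructor
      · rw [happ s]
        linear_combination (M (Pi.single k 1) s) * hAB
      · intro j hj
        have hterm2 : 0 ≤ (sg n (m+1) j * sB Φ cc s y j * sg n m s) * (sg n m s * v s) :=
          mul_nonneg (hB j hj).le hvs_nonneg
        have hterm1 : 0 ≤ sg n (m+1) j * v j ∨ v j = 0 := by
          by_cases hjr : j = r
          · exact Or.inr (by rw [hjr]; exact hvz)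
          · left
            have hsg : sg n (m+1) j = sg n m j := by
              unfold sg
              exact if_congr (sideC_succ hn hm hjr hj) rfl rfl
            rw [hsg]
            exact (hInvk j hjr).1
        have key : sg n (m+1) j * (sA Φ cc s y j * v j + sB Φ cc s y j * v s)
            = sA Φ cc s y j * (sg n (m+1) j * v j) +
              (sg n (m+1) j * sB Φ cc s y j * sg n m s) * (sg n m s * v s) := by
          have e1 : (sg n (m+1) j * sB Φ cc s y j * sg n m s) * (sg n m s * v s)
              = sg n (m+1) j * sB Φ cc s y j * v s * (sg n m s * sg n m s) := by ring
          rw [e1, hss]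
          ring
        rw [happ j, key]
        have ht1nn : 0 ≤ sA Φ cc s y j * (sg n (m+1) j * v j) := by
          rcases hterm1 with h' | h'
          · exact mul_nonneg (hA j).le h'
          · rw [h']
            simp
        constructor
        · exact add_nonneg ht1nn hterm2
        · intro hcond
          -- strictness case analysis
          rcases Nat.lt_or_ge m (k : ℕ) with hk1 | hk1
          · -- k ≥ m+1
            have hkm1 : (k:ℕ) = m+1 ∨ ((k:ℕ) > m+1 ∧ j = k) := by
              rcases hcond with hc | hc
              · exact Or.inl (by omega)
              · rcases Nat.eq_or_lt_of_le (by omega : m+1 ≤ (k:ℕ)) with h' | h'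
                · exact Or.inl h'.symm
                · exact Or.inr ⟨h', hc⟩
            rcases hkm1 with hc | ⟨hc, hjk⟩
            · -- subcase B : k = m+1, hence s = k and row s of M is strictly signed
              have hsk : s = k := by
                apply Fin.ext
                rw [hs, zC_val, Nat.mod_eq_of_lt (by omega : m+1 < n)]
                omega
              have hvs_pos : 0 < sg n m s * v s :=
                (hInvk s hsr).2 (Or.inr hsk)
              have hterm2' : 0 < (sg n (m+1) j * sB Φ cc s y j * sg n m s) * (sg n m s * v s) :=
                mul_pos (hB j hj) hvs_pos
              linarith
            · -- subcase C : k > m+1, j = k, diagonal entry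
              have hjr : j ≠ r := by
                intro h'
                have := congrArg Fin.val h'
                rw [hjk] at this
                rw [hr, zC_val, Nat.mod_eq_of_lt (by omega : m < n)] at this
                omega
              have hsg : sg n (m+1) j = sg n m j := by
                unfold sg
                exact if_congr (sideC_succ hn hm hjr hj) rfl rfl
              have hterm1' : 0 < sA Φ cc s y j * (sg n (m+1) j * v j) := by
                rw [hsg]
                exact mul_pos (hA j) ((hInvk j hjr).2 (Or.inr hjk))
              linarith
          · -- subcase A : k ≤ m, whole column strictly signed already
            by_cases hjr : j = r
            · have hvs_pos : 0 < sg n m s * v s :=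
                (hInvk s hsr).2 (Or.inl hk1)
              have hterm2' : 0 < (sg n (m+1) j * sB Φ cc s y j * sg n m s) * (sg n m s * v s) :=
                mul_pos (hB j hj) hvs_pos
              linarith
            · have hsg : sg n (m+1) j = sg n m j := by
                unfold sg
                exact if_congr (sideC_succ hn hm hjr hj) rfl rfl
              have hterm1' : 0 < sA Φ cc s y j * (sg n (m+1) j * v j) := by
                rw [hsg]
                exact mul_pos (hA j) ((hInvk j hjr).2 (Or.inl hk1))
              linarith

lemma zone_sub (hφ : ∀ i, φm i < 0 ∧ 0 < φp i) {x : Fin n → ℝ}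
    (hx : x ∈ zoneC n φm φp 1) : Qbar φm φp 0 x := by
  obtain ⟨h0, hj⟩ := hx
  have h0' : x (zC n 0) = 0 := h0
  refine ⟨h0', fun j => ?_⟩
  by_cases hjz : j = zC n 0
  · subst hjz
    rw [h0']
    split_ifs
    · exact ⟨le_rfl, (hφ _).2.le⟩
    · exact ⟨(hφ _).1.le, le_rfl⟩
  · rw [if_pos (sideC_zero j hjz)]
    have hlt : ((sIdx n 1 : Fin n) : ℕ) < (j : ℕ) := by
      have h1 : (j:ℕ) ≠ 0 := fun h => hjz (Fin.ext (by rw [h, zC_zero_val]))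
      have h2 : ((sIdx n 1 : Fin n):ℕ) = 0 := zC_zero_val
      omega
    have h2 := (hj j).2 hlt
    have hcond : (1 - 1) % (2 * n) < n := by
      rw [show (1:ℕ) - 1 = 0 from rfl, Nat.zero_mod]
      exact Nat.pos_of_ne_zero (NeZero.ne n)
    rw [if_pos hcond] at h2
    exact h2

lemma int_sub {x : Fin n → ℝ} (hx0 : x (sIdx n 1) = 0)
    (hxi : ∀ j : Fin n, j ≠ sIdx n 1 → 0 < x j ∧ x j < φp j) : Qint φm φp 0 x := by
  refine ⟨hx0, fun j hj => ?_⟩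
  rw [if_pos (sideC_zero j hj)]
  exact ⟨(hxi j hj).1, (hxi j hj).2⟩

end main

end CondM

/-- **The Poincaré map is `C¹` and satisfies the monotonicity condition (M), `n ≥ 3`.**
The Poincaré map `T` of the cycle is `C¹` on the zone `Z^1`, and at every point `x` of the
(relative) interior of `Z^1` (i.e. `x_{s_1} = 0` and `0 < x_j < φ_j^+` for `j ≠ s_1`) it is
differentiable with all the entries of its `(n−1) × (n−1)` Jacobian matrix strictly
positive: `0 < ∂T_j/∂x_k (x)` for all `j, k ≠ s_1`. -/
theorem poincare_map_condition_M
    (n : ℕ) [NeZero n] (hn : 3 ≤ n)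
    (γ φm φp : Fin n → ℝ) (hγ : ∀ i, 0 < γ i)
    (hφ : ∀ i, φm i < 0 ∧ 0 < φp i) :
    ContDiffOn ℝ 1 (poincare n γ φm φp) (zoneC n φm φp 1) ∧
    ∀ x : Fin n → ℝ, x (sIdx n 1) = 0 →
      (∀ j : Fin n, j ≠ sIdx n 1 → 0 < x j ∧ x j < φp j) →
      DifferentiableAt ℝ (poincare n γ φm φp) x ∧
      ∀ j k : Fin n, j ≠ sIdx n 1 → k ≠ sIdx n 1 →
        0 < fderiv ℝ (poincare n γ φm φp) x (Pi.single k 1) j := by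
  have hn2 : 2 ≤ n := by omega
  constructor
  · intro x hx
    have h := (CondM.main_bar hn2 hγ hφ x (CondM.zone_sub hφ hx) (2*n) le_rfl).2
    exact (h : ContDiffAt ℝ 1 (poincare n γ φm φp) x).contDiffWithinAt
  · intro x hx0 hxi
    obtain ⟨M, hM, _, hInv⟩ :=
      CondM.main_strict hn2 hγ hφ x (CondM.int_sub hx0 hxi) (2*n) le_rfl
    have hM' : HasFDerivAt (poincare n γ φm φp) M x := hM
    refine ⟨hM'.differentiableAt, fun j k hj hk => ?_⟩
    rw [hM'.fderiv]
    have hj0 : j ≠ CondM.zC n 0 := hj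
    have hk0 : k ≠ CondM.zC n 0 := hk
    have hj' : j ≠ CondM.zC n (2*n) := by
      rw [CondM.zC_final hn2]
      exact hj0
    have hk2n : (k:ℕ) ≤ 2*n := by
      have := k.isLt
      omega
    have h := ((hInv k hk0).2 j hj').2 (Or.inl hk2n)
    have hsg : CondM.sg n (2*n) j = 1 := by
      rw [CondM.sg, if_pos (CondM.sideC_final hn2 j hj0)]
    rw [hsg, one_mul] at h
    exact h
end

section
/- Suppose n = 2, so that Z^1 = [0, φ_2^+] ⊂ ℝ and the Poincaré map T : [0, φ_2^+] → [0, φ_2^+] is a scalar map with T(0) = 0. Then its derivative at 0 equals 1: T'(0) = |(κ^1_2/κ^1_1)(κ^4_1/κ^4_2)(κ^3_2/κ^3_1)(κ^2_1/κ^2_2)| = 1, where κ^i_j = γ_j φ^i_j denotes the production term of coordinate j in box a^i. -/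
open Filter Topology Set

/-- Production rate `κ^i_j = γ_j φ^i_j` of coordinate `j` in the box `a^i` of the cycle,
for the two-dimensional negative feedback loop system. -/
def kapC (γ φm φp : Fin 2 → ℝ) (i : ℕ) (j : Fin 2) : ℝ :=
  γ j * phiC 2 φm φp i j

section Aux

private lemma phiC20 (φm φp : Fin 2 → ℝ) : phiC 2 φm φp 2 0 = φm 0 := rfl
private lemma phiC21 (φm φp : Fin 2 → ℝ) : phiC 2 φm φp 2 1 = φm 1 := rfl
private lemma phiC30 (φm φp : Fin 2 → ℝ) : phiC 2 φm φp 3 0 = φp 0 := rfl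
private lemma phiC31 (φm φp : Fin 2 → ℝ) : phiC 2 φm φp 3 1 = φm 1 := rfl
private lemma phiC40 (φm φp : Fin 2 → ℝ) : phiC 2 φm φp 4 0 = φp 0 := rfl
private lemma phiC41 (φm φp : Fin 2 → ℝ) : phiC 2 φm φp 4 1 = φp 1 := rfl
private lemma phiC50 (φm φp : Fin 2 → ℝ) : phiC 2 φm φp 5 0 = φm 0 := rfl
private lemma phiC51 (φm φp : Fin 2 → ℝ) : phiC 2 φm φp 5 1 = φp 1 := rfl
private lemma phiC10 (φm φp : Fin 2 → ℝ) : phiC 2 φm φp 1 0 = φm 0 := rfl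
private lemma phiC11 (φm φp : Fin 2 → ℝ) : phiC 2 φm φp 1 1 = φp 1 := rfl
private lemma sIdx2 : sIdx 2 2 = 1 := rfl
private lemma sIdx3 : sIdx 2 3 = 0 := rfl
private lemma sIdx4 : sIdx 2 4 = 1 := rfl
private lemma sIdx5 : sIdx 2 5 = 0 := rfl

private lemma transMap_zero (γ φm φp : Fin 2 → ℝ) (k : ℕ)
    (hs : phiC 2 φm φp k (sIdx 2 k) ≠ 0) : transMap 2 γ φm φp k 0 = 0 := by
  funext j
  simp [transMap, div_self hs, Real.one_rpow]

open ContinuousLinearMap in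
private lemma hasFDerivAt_transMap_zero (γ φm φp : Fin 2 → ℝ) (k : ℕ)
    (hγ : ∀ i, γ i ≠ 0) (hs : phiC 2 φm φp k (sIdx 2 k) ≠ 0) :
    HasFDerivAt (transMap 2 γ φm φp k)
      (ContinuousLinearMap.pi fun j =>
        (proj j : (Fin 2 → ℝ) →L[ℝ] ℝ) +
          (-(phiC 2 φm φp k j) * (γ j / γ (sIdx 2 k)) / phiC 2 φm φp k (sIdx 2 k)) •
            (proj (sIdx 2 k) : (Fin 2 → ℝ) →L[ℝ] ℝ)) 0 := by
  set s := sIdx 2 k with hsdef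
  set φ := phiC 2 φm φp k with hφdef
  rw [hasFDerivAt_pi']
  intro j
  rw [ContinuousLinearMap.proj_pi]
  have hden : HasDerivAt (fun t : ℝ => φ s - t) (-1) 0 := by
    simpa using (hasDerivAt_id (0:ℝ)).const_sub (φ s)
  have hq : HasDerivAt (fun t : ℝ => φ s / (φ s - t))
      ((0 * (φ s - 0) - φ s * (-1)) / (φ s - 0) ^ 2) 0 :=
    (hasDerivAt_const 0 (φ s)).div hden (by simpa using hs)
  have hg : HasDerivAt (fun t : ℝ => (φ s / (φ s - t)) ^ (γ j / γ s))
      ((0 * (φ s - 0) - φ s * (-1)) / (φ s - 0) ^ 2 * (γ j / γ s) *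
        (φ s / (φ s - 0)) ^ (γ j / γ s - 1)) 0 :=
    hq.rpow_const (Or.inl (by simp [div_self hs]))
  have hG : HasFDerivAt (fun x : Fin 2 → ℝ => (φ s / (φ s - x s)) ^ (γ j / γ s))
      (((0 * (φ s - 0) - φ s * (-1)) / (φ s - 0) ^ 2 * (γ j / γ s) *
        (φ s / (φ s - 0)) ^ (γ j / γ s - 1)) • (proj s : (Fin 2 → ℝ) →L[ℝ] ℝ)) 0 := by
    have := hg.comp_hasFDerivAt_of_eq (0 : Fin 2 → ℝ)
      ((proj s : (Fin 2 → ℝ) →L[ℝ] ℝ).hasFDerivAt) (by simp)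
    exact this
  have hxj : HasFDerivAt (fun x : Fin 2 → ℝ => x j - φ j)
      (proj j : (Fin 2 → ℝ) →L[ℝ] ℝ) 0 := by
    simpa using ((proj j : (Fin 2 → ℝ) →L[ℝ] ℝ).hasFDerivAt (x := (0:Fin 2 → ℝ))).sub_const (φ j)
  have hmul := (hxj.mul hG).const_add (φ j)
  refine HasFDerivAt.congr_fderiv hmul ?_
  ext v
  have h1 : ((0 : Fin 2 → ℝ)) s = 0 := rfl
  have h2 : ((0 : Fin 2 → ℝ)) j = 0 := rfl
  simp only [ContinuousLinearMap.add_apply, ContinuousLinearMap.smul_apply,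
    ContinuousLinearMap.proj_apply, h1, h2, sub_zero, div_self hs, Real.one_rpow,
    smul_eq_mul, zero_sub, zero_mul, mul_neg, neg_neg]
  field_simp [hs, hγ s, hγ j]
  ring

private lemma cancel6 (a b c d e f : ℝ) (ha : a ≠ 0) (hb : b ≠ 0) (hc : c ≠ 0)
    (hd : d ≠ 0) (he : e ≠ 0) (hf : f ≠ 0) :
    a ^ 2 * b * c ^ 2 * d * e * f * a⁻¹ ^ 2 * b⁻¹ * c⁻¹ ^ 2 * d⁻¹ * e⁻¹ * f⁻¹ = 1 := by
  rw [show a ^ 2 * b * c ^ 2 * d * e * f * a⁻¹ ^ 2 * b⁻¹ * c⁻¹ ^ 2 * d⁻¹ * e⁻¹ * f⁻¹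
      = (a * a⁻¹) ^ 2 * (b * b⁻¹) * (c * c⁻¹) ^ 2 * (d * d⁻¹) * (e * e⁻¹) * (f * f⁻¹) from by
        ring, mul_inv_cancel₀ ha, mul_inv_cancel₀ hb, mul_inv_cancel₀ hc, mul_inv_cancel₀ hd,
    mul_inv_cancel₀ he, mul_inv_cancel₀ hf]
  norm_num

private lemma cancel6' (a b c d e f : ℝ) (ha : a ≠ 0) (hb : b ≠ 0) (hc : c ≠ 0)
    (hd : d ≠ 0) (he : e ≠ 0) (hf : f ≠ 0) :
    a * b ^ 2 * c * d ^ 2 * e * f * a⁻¹ * b⁻¹ ^ 2 * c⁻¹ * d⁻¹ ^ 2 * e⁻¹ * f⁻¹ = 1 := by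
  rw [show a * b ^ 2 * c * d ^ 2 * e * f * a⁻¹ * b⁻¹ ^ 2 * c⁻¹ * d⁻¹ ^ 2 * e⁻¹ * f⁻¹
      = (a * a⁻¹) * (b * b⁻¹) ^ 2 * (c * c⁻¹) * (d * d⁻¹) ^ 2 * (e * e⁻¹) * (f * f⁻¹) from by
        ring, mul_inv_cancel₀ ha, mul_inv_cancel₀ hb, mul_inv_cancel₀ hc, mul_inv_cancel₀ hd,
    mul_inv_cancel₀ he, mul_inv_cancel₀ hf]
  norm_num

end Aux

/-- **In dimension `n = 2` the derivative of the Poincaré map at the origin equals `1`.**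
Here `Z^1 = [0, φ_2^+]` is one-dimensional (embedded in `ℝ²` as `{0} × [0, φ_2^+]`), the
Poincaré map `T` is a scalar map with `T(0) = 0`, and its derivative at `0` is
`T'(0) = |(κ^1_2/κ^1_1)·(κ^4_1/κ^4_2)·(κ^3_2/κ^3_1)·(κ^2_1/κ^2_2)| = 1`, where
`κ^i_j = γ_j φ^i_j` (coordinate `0` of `Fin 2` is the paper's variable `1`, coordinate `1`
is variable `2`). -/
theorem poincare_map_derivative_at_origin_dim_two
    (γ φm φp : Fin 2 → ℝ) (hγ : ∀ i, 0 < γ i)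
    (hφ : ∀ i, φm i < 0 ∧ 0 < φp i) :
    poincare 2 γ φm φp 0 = 0 ∧
    fderiv ℝ (poincare 2 γ φm φp) 0 (Pi.single 1 1) 1 =
      |kapC γ φm φp 1 1 / kapC γ φm φp 1 0 * (kapC γ φm φp 4 0 / kapC γ φm φp 4 1) *
        (kapC γ φm φp 3 1 / kapC γ φm φp 3 0) * (kapC γ φm φp 2 0 / kapC γ φm φp 2 1)| ∧
    |kapC γ φm φp 1 1 / kapC γ φm φp 1 0 * (kapC γ φm φp 4 0 / kapC γ φm φp 4 1) *
        (kapC γ φm φp 3 1 / kapC γ φm φp 3 0) * (kapC γ φm φp 2 0 / kapC γ φm φp 2 1)|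
      = 1 := by
  have hγ' : ∀ i, (γ i) ≠ 0 := fun i => (hγ i).ne'
  have hm0 : φm 0 ≠ 0 := (hφ 0).1.ne
  have hm1 : φm 1 ≠ 0 := (hφ 1).1.ne
  have hp0 : φp 0 ≠ 0 := (hφ 0).2.ne'
  have hp1 : φp 1 ≠ 0 := (hφ 1).2.ne'
  have hs2 : phiC 2 φm φp 2 (sIdx 2 2) ≠ 0 := hm1
  have hs3 : phiC 2 φm φp 3 (sIdx 2 3) ≠ 0 := hp0
  have hs4 : phiC 2 φm φp 4 (sIdx 2 4) ≠ 0 := hp1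
  have hs5 : phiC 2 φm φp 5 (sIdx 2 5) ≠ 0 := hm0
  have t2 := transMap_zero γ φm φp 2 hs2
  have t3 := transMap_zero γ φm φp 3 hs3
  have t4 := transMap_zero γ φm φp 4 hs4
  have t5 := transMap_zero γ φm φp 5 hs5
  have hzero : poincare 2 γ φm φp 0 = 0 := by
    show transMap 2 γ φm φp 5 (transMap 2 γ φm φp 4 (transMap 2 γ φm φp 3
      (transMap 2 γ φm φp 2 0))) = 0
    rw [t2, t3, t4, t5]
  have H2 := hasFDerivAt_transMap_zero γ φm φp 2 hγ' hs2
  have H3 := hasFDerivAt_transMap_zero γ φm φp 3 hγ' hs3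
  have H4 := hasFDerivAt_transMap_zero γ φm φp 4 hγ' hs4
  have H5 := hasFDerivAt_transMap_zero γ φm φp 5 hγ' hs5
  rw [show (0 : Fin 2 → ℝ) = transMap 2 γ φm φp 2 0 from t2.symm] at H3
  have C2 := H3.comp (0 : Fin 2 → ℝ) H2
  rw [show (0 : Fin 2 → ℝ) = (transMap 2 γ φm φp 3 ∘ transMap 2 γ φm φp 2) 0
    from (by simp [Function.comp, t2, t3] :
      (transMap 2 γ φm φp 3 ∘ transMap 2 γ φm φp 2) 0 = 0).symm] at H4
  have C3 := H4.comp (0 : Fin 2 → ℝ) C2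
  rw [show (0 : Fin 2 → ℝ) =
      (transMap 2 γ φm φp 4 ∘ transMap 2 γ φm φp 3 ∘ transMap 2 γ φm φp 2) 0
    from (by simp [Function.comp, t2, t3, t4] :
      (transMap 2 γ φm φp 4 ∘ transMap 2 γ φm φp 3 ∘ transMap 2 γ φm φp 2) 0 = 0).symm] at H5
  have C4 := H5.comp (0 : Fin 2 → ℝ) C3
  have hpe : poincare 2 γ φm φp = transMap 2 γ φm φp 5 ∘ transMap 2 γ φm φp 4 ∘
      transMap 2 γ φm φp 3 ∘ transMap 2 γ φm φp 2 := rfl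
  rw [← hpe] at C4
  have hfd := C4.fderiv
  have hinside : kapC γ φm φp 1 1 / kapC γ φm φp 1 0 * (kapC γ φm φp 4 0 / kapC γ φm φp 4 1) *
      (kapC γ φm φp 3 1 / kapC γ φm φp 3 0) * (kapC γ φm φp 2 0 / kapC γ φm φp 2 1) = 1 := by
    simp only [kapC, phiC10, phiC11, phiC40, phiC41, phiC30, phiC31, phiC20, phiC21]
    field_simp [hm0, hm1, hp0, hp1, hγ' 0, hγ' 1]
  refine ⟨hzero, ?_, by rw [hinside, abs_one]⟩
  rw [hinside, abs_one, hfd]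
  simp only [ContinuousLinearMap.comp_apply, ContinuousLinearMap.pi_apply,
    ContinuousLinearMap.add_apply, ContinuousLinearMap.smul_apply,
    ContinuousLinearMap.proj_apply, smul_eq_mul, sIdx2, sIdx3, sIdx4, sIdx5,
    phiC20, phiC21, phiC30, phiC31, phiC40, phiC41, phiC50, phiC51,
    Pi.single_apply]
  field_simp [hm0, hm1, hp0, hp1, hγ' 0, hγ' 1]
  rw [if_pos trivial, if_neg (show ¬ ((0 : Fin 2) = 1) by decide)]
  ring
end

section
/- Suppose n ≥ 3. Then T(0) = 0, and the (n−1) × (n−1) Jacobian matrix DT(0) of the Poincaré map at the origin satisfies DT(0) − Id > 0 entrywise (every diagonal entry of DT(0) is strictly greater than 1 and every off-diagonal entry is positive); consequently the spectral radius of DT(0) is strictly greater than 1. -/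
open Filter Topology Set

set_option linter.unusedSectionVars false

noncomputable section

namespace NFL

variable {n : ℕ} [NeZero n] {γ φm φp : Fin n → ℝ}

lemma npos : 0 < n := Nat.pos_of_ne_zero (NeZero.ne n)

lemma sIdx_val (m : ℕ) : (sIdx n m : ℕ) = (m - 1) % n := rfl

lemma mod_small {a : ℕ} (h : a < n) : a % n = a := Nat.mod_eq_of_lt h

lemma mod_mid {a : ℕ} (h1 : n ≤ a) (h2 : a < 2 * n) : a % n = a - n := by
  rw [Nat.mod_eq_sub_mod h1, Nat.mod_eq_of_lt (by omega)]

lemma phiC_mem (m : ℕ) (j : Fin n) :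
    phiC n φm φp m j = φm j ∨ phiC n φm φp m j = φp j := by
  unfold phiC focal
  split_ifs <;> simp

lemma phiC_ne_zero (hφ : ∀ i, φm i < 0 ∧ 0 < φp i) (m : ℕ) (j : Fin n) :
    phiC n φm φp m j ≠ 0 := by
  rcases phiC_mem (φm := φm) (φp := φp) m j with h | h <;> rw [h]
  · exact ne_of_lt (hφ j).1
  · exact ne_of_gt (hφ j).2

lemma boxC_succ_ne {m : ℕ} (hm : 1 ≤ m) (hm2 : m ≤ 2 * n) (i : Fin n)
    (hi : (i : ℕ) ≠ (m - 1) % n) : boxC n (m + 1) i = boxC n m i := by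
  have hn0 : 0 < n := npos
  have hlt := i.isLt
  unfold boxC
  rcases le_or_gt m n with h | h
  · rw [mod_small (by omega)] at hi
    rw [if_pos (by omega), if_pos (by omega), decide_eq_decide]
    omega
  · rcases Nat.eq_or_lt_of_le h with h' | h'
    · subst h'
      rw [Nat.succ_sub_one, Nat.mod_self] at hi
      rw [if_neg (by omega), if_pos (by omega), decide_eq_decide]
      omega
    · rw [mod_mid (by omega) (by omega)] at hi
      rw [if_neg (by omega), if_neg (by omega), decide_eq_decide]
      omega

lemma boxC_succ_flip {m : ℕ} (hm : 1 ≤ m) (hm2 : m ≤ 2 * n) (i : Fin n)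
    (hi : (i : ℕ) = (m - 1) % n) : boxC n (m + 1) i = ! boxC n m i := by
  have hn0 : 0 < n := npos
  have hlt := i.isLt
  unfold boxC
  rcases le_or_gt m n with h | h
  · rw [mod_small (by omega)] at hi
    rw [if_pos (by omega), if_pos (by omega)]
    rw [← decide_not, decide_eq_decide]
    omega
  · rcases Nat.eq_or_lt_of_le h with h' | h'
    · subst h'
      rw [Nat.succ_sub_one, Nat.mod_self] at hi
      rw [if_neg (by omega), if_pos (by omega)]
      rw [← decide_not, decide_eq_decide]
      omega
    · rw [mod_mid (by omega) (by omega)] at hi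
      rw [if_neg (by omega), if_neg (by omega)]
      rw [← decide_not, decide_eq_decide]
      omega

lemma val_one (hn : 3 ≤ n) : ((1 : Fin n) : ℕ) = 1 := by
  have : ((1 : Fin n) : ℕ) = 1 % n := Fin.val_one' n
  rw [this, mod_small (by omega)]

lemma sIdx_succ {m : ℕ} (hn : 3 ≤ n) (hm : 1 ≤ m) :
    sIdx n (m + 1) = sIdx n m + 1 := by
  apply Fin.ext
  rw [Fin.val_add, sIdx_val, sIdx_val, val_one hn]
  conv_lhs => rw [show m + 1 - 1 = m from rfl, ← Nat.sub_add_cancel hm]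
  rw [Nat.add_mod (m-1) 1 n, mod_small (a := 1) (by omega)]

lemma sub_one_eq_iff {j s : Fin n} : j - 1 = s ↔ j = s + 1 := sub_eq_iff_eq_add

lemma phiC_succ_ne {m : ℕ} (hn : 3 ≤ n) (hm : 1 ≤ m) (hm2 : m ≤ 2 * n) (j : Fin n)
    (hj : j ≠ sIdx n (m + 1)) : phiC n φm φp (m + 1) j = phiC n φm φp m j := by
  have hne : ((j - 1 : Fin n) : ℕ) ≠ (m - 1) % n := by
    intro h
    apply hj
    rw [sIdx_succ hn hm]
    exact sub_one_eq_iff.mp (Fin.ext h)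
  unfold phiC focal
  rw [boxC_succ_ne hm hm2 _ hne]

lemma phiC_succ_flip {m : ℕ} (hφ : ∀ i, φm i < 0 ∧ 0 < φp i) (hn : 3 ≤ n)
    (hm : 1 ≤ m) (hm2 : m ≤ 2 * n) :
    phiC n φm φp (m + 1) (sIdx n (m + 1)) * phiC n φm φp m (sIdx n (m + 1)) < 0 := by
  set j := sIdx n (m + 1) with hjdef
  have hj1 : j - 1 = sIdx n m := by
    rw [sub_one_eq_iff, hjdef, sIdx_succ hn hm]
  have hval : ((j - 1 : Fin n) : ℕ) = (m - 1) % n := by rw [hj1]; rfl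
  have hflip : boxC n (m + 1) (j - 1) = ! boxC n m (j - 1) :=
    boxC_succ_flip hm hm2 _ hval
  obtain ⟨h1, h2⟩ := hφ j
  unfold phiC focal
  rw [hflip]
  cases boxC n m (j - 1) <;> split_ifs <;> simp_all <;>
    nlinarith [mul_neg_of_neg_of_pos (hφ j).1 (hφ j).2, mul_neg_of_neg_of_pos (hφ 0).1 (hφ 0).2]


lemma val_zero' : ((0 : Fin n) : ℕ) = 0 := rfl

lemma sub_one_val (j : Fin n) (hn : 3 ≤ n) :
    ((j - 1 : Fin n) : ℕ) = if (j : ℕ) = 0 then n - 1 else (j : ℕ) - 1 := by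
  have hlt := j.isLt
  have h1 : ((1 : Fin n) : ℕ) = 1 := val_one hn
  rw [Fin.sub_def]
  simp only [h1]
  split_ifs with h
  · rw [h, Nat.add_zero, mod_small (by omega)]
  · rw [show n - 1 + (j:ℕ) = ((j:ℕ) - 1) + n by omega, Nat.add_mod_right,
      mod_small (by omega)]

-- value lemmas
lemma phiC_zero_first {m : ℕ} (hn : 3 ≤ n) (hm : 1 ≤ m) (hm2 : m ≤ n) :
    phiC n φm φp m 0 = φm 0 := by
  unfold phiC focal
  rw [if_pos val_zero']
  have hb : boxC n m ((0:Fin n) - 1) = true := by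
    unfold boxC
    rw [if_pos (by omega)]
    have : (((0:Fin n) - 1 : Fin n) : ℕ) = n - 1 := by rw [sub_one_val _ hn, if_pos val_zero']
    rw [this, decide_eq_true_eq]
    omega
  rw [hb, if_pos rfl]

lemma phiC_zero_second {m : ℕ} (hn : 3 ≤ n) (hm : n + 1 ≤ m) (hm2 : m ≤ 2 * n) :
    phiC n φm φp m 0 = φp 0 := by
  unfold phiC focal
  rw [if_pos val_zero']
  have hv : (((0:Fin n) - 1 : Fin n) : ℕ) = n - 1 := by rw [sub_one_val _ hn, if_pos val_zero']
  have hb : boxC n m ((0:Fin n) - 1) = false := by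
    unfold boxC
    rw [hv]
    split_ifs
    · rw [decide_eq_false_iff_not]; omega
    · rw [decide_eq_false_iff_not]; omega
  rw [hb]
  simp

lemma phiC_zero_last (hn : 3 ≤ n) : phiC n φm φp (2 * n + 1) 0 = φm 0 := by
  unfold phiC focal
  rw [if_pos val_zero']
  have hv : (((0:Fin n) - 1 : Fin n) : ℕ) = n - 1 := by rw [sub_one_val _ hn, if_pos val_zero']
  have hb : boxC n (2 * n + 1) ((0:Fin n) - 1) = true := by
    unfold boxC
    rw [hv]
    rw [if_neg (by omega), decide_eq_true_eq]
    omega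
  rw [hb, if_pos rfl]

lemma phiC_k_eval {m : ℕ} (hn : 3 ≤ n) (k : Fin n) (hk : (k : ℕ) ≠ 0) (b : Bool)
    (hb : boxC n m (k - 1) = b) :
    phiC n φm φp m k = if b then φp k else φm k := by
  unfold phiC focal
  rw [if_neg hk, hb]

lemma boxC_k_val {m : ℕ} (hn : 3 ≤ n) (k : Fin n) (hk : (k : ℕ) ≠ 0) :
    boxC n m (k - 1) = (if m ≤ n + 1 then decide (m ≤ (k:ℕ)) else decide ((k:ℕ) < m - n)) := by
  have hv : ((k - 1 : Fin n) : ℕ) = (k:ℕ) - 1 := by rw [sub_one_val _ hn, if_neg hk]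
  unfold boxC
  rw [hv]
  split_ifs with h
  · rw [decide_eq_decide]; omega
  · rw [decide_eq_decide]; omega

lemma phiC_k_a {m : ℕ} (hn : 3 ≤ n) (k : Fin n) (hk : (k : ℕ) ≠ 0)
    (hm : 1 ≤ m) (hm2 : m ≤ (k:ℕ)) : phiC n φm φp m k = φp k := by
  have hkn := k.isLt
  rw [phiC_k_eval hn k hk true]
  · simp
  · rw [boxC_k_val hn k hk, if_pos (by omega), decide_eq_true_eq]; omega

lemma phiC_k_b {m : ℕ} (hn : 3 ≤ n) (k : Fin n) (hk : (k : ℕ) ≠ 0)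
    (hm : (k:ℕ) + 1 ≤ m) (hm2 : m ≤ n + (k:ℕ)) : phiC n φm φp m k = φm k := by
  have hkn := k.isLt
  rw [phiC_k_eval hn k hk false]
  · simp
  · rw [boxC_k_val hn k hk]
    split_ifs
    · rw [decide_eq_false_iff_not]; omega
    · rw [decide_eq_false_iff_not]; omega

lemma phiC_k_c {m : ℕ} (hn : 3 ≤ n) (k : Fin n) (hk : (k : ℕ) ≠ 0)
    (hm : n + (k:ℕ) + 1 ≤ m) (hm2 : m ≤ 2 * n + 1) : phiC n φm φp m k = φp k := by
  have hkn := k.isLt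
  rw [phiC_k_eval hn k hk true]
  · simp
  · rw [boxC_k_val hn k hk, if_neg (by omega), decide_eq_true_eq]; omega


-- sign helper lemmas
lemma SL1 {a b x : ℝ} (hab : a * b < 0) (hbx : 0 ≤ b * x) : 0 ≤ -x / a := by
  rcases lt_trichotomy a 0 with h | h | h
  · have hb : 0 < b := by nlinarith
    have hx : 0 ≤ x := by nlinarith
    exact div_nonneg_iff.mpr (Or.inr ⟨by linarith, h.le⟩)
  · subst h; rw [zero_mul] at hab; linarith
  · have hb : b < 0 := by nlinarith
    have hx : x ≤ 0 := by nlinarith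
    exact div_nonneg_iff.mpr (Or.inl ⟨by linarith, h.le⟩)

lemma SL2 {a b x : ℝ} (hab : a * b < 0) (hbx : 0 < b * x) : 0 < -x / a := by
  rcases lt_trichotomy a 0 with h | h | h
  · have hb : 0 < b := by nlinarith
    have hx : 0 < x := by nlinarith
    exact div_pos_iff.mpr (Or.inr ⟨by linarith, h⟩)
  · subst h; rw [zero_mul] at hab; linarith
  · have hb : b < 0 := by nlinarith
    have hx : x < 0 := by nlinarith
    exact div_pos_iff.mpr (Or.inl ⟨by linarith, h⟩)

lemma sIdx_succ_ne {m : ℕ} (hn : 3 ≤ n) (hm : 1 ≤ m) : sIdx n (m + 1) ≠ sIdx n m := by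
  rw [sIdx_succ hn hm]
  intro h
  have h2 : (1 : Fin n) = 0 := by
    have := add_left_cancel (a := sIdx n m) (b := 1) (c := 0) (by rw [add_zero]; exact h)
    exact this
  have h3 := congrArg Fin.val h2
  rw [val_one hn, val_zero'] at h3
  exact one_ne_zero h3

-- the linear step map (the derivative of the transition map at the origin)
def dcoef (n : ℕ) [NeZero n] (γ φm φp : Fin n → ℝ) (m : ℕ) (j : Fin n) : ℝ :=
  γ j / γ (sIdx n m) * (-(phiC n φm φp m j) / phiC n φm φp m (sIdx n m))

def stepL (n : ℕ) [NeZero n] (γ φm φp : Fin n → ℝ) (m : ℕ) (v : Fin n → ℝ) :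
    Fin n → ℝ :=
  fun j => v j + dcoef n γ φm φp m j * v (sIdx n m)

/-- The master invariant carried along the cycle, for the evolution of the `k`-th
basis vector under the linearized transition maps.  `m` is the index of the current
zone (state `m` is reached after applying the steps `2, …, m`). -/
structure MInv (n : ℕ) [NeZero n] (γ φm φp : Fin n → ℝ) (k : Fin n) (m : ℕ)
    (v : Fin n → ℝ) : Prop where
  zero : v (sIdx n m) = 0
  nonneg : ∀ j, j ≠ sIdx n m → 0 ≤ phiC n φm φp m j * v j
  strict : (k : ℕ) + 1 ≤ m → ∀ j, j ≠ sIdx n m → 0 < phiC n φm φp m j * v j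
  single : m ≤ (k : ℕ) → v = Pi.single k 1
  tok1 : (k : ℕ) + 1 ≤ m → m ≤ n → -(γ 0 * φm 0) ≤ γ k * φm k * v 0
  tok2 : n + 1 ≤ m → m ≤ n + (k : ℕ) → φp 0 * v k ≤ φm 0
  tok3 : n + (k : ℕ) + 1 ≤ m → m ≤ 2 * n →
    -(γ 0 * φm 0) ≤ γ k * φp k * v 0 ∧
      ((k : ℕ) = n - 1 → -(γ 0 * φm 0) < γ k * φp k * v 0)

lemma inv_base (hφ : ∀ i, φm i < 0 ∧ 0 < φp i) (hn : 3 ≤ n) (k : Fin n)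
    (hk : (k : ℕ) ≠ 0) : MInv n γ φm φp k 1 (Pi.single k 1) := by
  have hks : sIdx n 1 ≠ k := fun h => hk (by rw [← h]; rfl)
  constructor
  · rw [Pi.single_apply, if_neg hks]
  · intro j hj
    rw [Pi.single_apply]
    split_ifs with h
    · subst h
      rw [mul_one, phiC_k_a hn j hk le_rfl (Nat.one_le_iff_ne_zero.mpr hk)]
      exact (hφ j).2.le
    · rw [mul_zero]
  · omega
  · intro _; rfl
  · omega
  · omega
  · omega


set_option maxHeartbeats 1000000 in
lemma inv_step (hγ : ∀ i, 0 < γ i) (hφ : ∀ i, φm i < 0 ∧ 0 < φp i) (hn : 3 ≤ n)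
    {k : Fin n} (hk : (k : ℕ) ≠ 0) {m : ℕ} (hm : 1 ≤ m) (hm2 : m ≤ 2 * n)
    {v : Fin n → ℝ} (hv : MInv n γ φm φp k m v) :
    MInv n γ φm φp k (m + 1) (stepL n γ φm φp (m + 1) v) := by
  have hkn := k.isLt
  have hk1 : 1 ≤ (k : ℕ) := Nat.one_le_iff_ne_zero.mpr hk
  have hkF : k ≠ 0 := fun h => hk (by rw [h]; rfl)
  set s' := sIdx n (m + 1) with hs'def
  set s := sIdx n m with hsdef
  have hss : s' ≠ s := sIdx_succ_ne hn hm
  have hs'val : (s' : ℕ) = m % n := rfl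
  have hsval : (s : ℕ) = (m - 1) % n := rfl
  have hPnew : ∀ j, j ≠ s' → phiC n φm φp (m + 1) j = phiC n φm φp m j :=
    fun j hj => phiC_succ_ne hn hm hm2 j hj
  have hflip : phiC n φm φp (m + 1) s' * phiC n φm φp m s' < 0 :=
    phiC_succ_flip hφ hn hm hm2
  have hPne : ∀ (t : ℕ) (j : Fin n), phiC n φm φp t j ≠ 0 := fun t => phiC_ne_zero hφ t
  have hγs' : 0 < γ s' := hγ s'
  have hβ : 0 ≤ -(v s') / phiC n φm φp (m + 1) s' := SL1 hflip (hv.nonneg s' hss)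
  have hθeq : ∀ j, phiC n φm φp (m + 1) j * (dcoef n γ φm φp (m + 1) j * v s') =
      γ j * (phiC n φm φp (m + 1) j) ^ 2 / γ s' *
        (-(v s') / phiC n φm φp (m + 1) s') := by
    intro j
    unfold dcoef
    rw [← hs'def]
    have h1 := hPne (m + 1) s'
    have h2 := hγs'.ne'
    field_simp
  have hθ : ∀ j, 0 ≤ phiC n φm φp (m + 1) j * (dcoef n γ φm φp (m + 1) j * v s') := by
    intro j
    rw [hθeq j]
    exact mul_nonneg (div_nonneg (mul_nonneg (hγ j).le (sq_nonneg _)) hγs'.le) hβ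
  have hsq : ∀ j, 0 < (phiC n φm φp (m + 1) j) ^ 2 := by
    intro j
    have := hPne (m + 1) j
    positivity
  have hθpos : 0 < phiC n φm φp m s' * v s' →
      ∀ j, 0 < phiC n φm φp (m + 1) j * (dcoef n γ φm φp (m + 1) j * v s') := by
    intro hpos j
    rw [hθeq j]
    exact mul_pos (div_pos (mul_pos (hγ j) (hsq j)) hγs') (SL2 hflip hpos)
  have hwapp : ∀ j, stepL n γ φm φp (m + 1) v j
      = v j + dcoef n γ φm φp (m + 1) j * v s' := fun j => rfl
  have hmulw : ∀ j, phiC n φm φp (m + 1) j * stepL n γ φm φp (m + 1) v j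
      = phiC n φm φp (m + 1) j * v j +
        phiC n φm φp (m + 1) j * (dcoef n γ φm φp (m + 1) j * v s') := by
    intro j
    rw [hwapp]
    ring
  have hzero' : stepL n γ φm φp (m + 1) v s' = 0 := by
    rw [hwapp]
    unfold dcoef
    rw [← hs'def, div_self hγs'.ne', one_mul, neg_div, div_self (hPne (m + 1) s')]
    ring
  -- nonneg, proved first and reused
  have hnonneg' : ∀ j, j ≠ s' →
      0 ≤ phiC n φm φp (m + 1) j * stepL n γ φm φp (m + 1) v j := by
    intro j hj
    rw [hmulw j]
    have h1 : 0 ≤ phiC n φm φp (m + 1) j * v j := by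
      by_cases hjs : j = s
      · rw [hjs, hv.zero, mul_zero]
      · rw [hPnew j hj]
        exact hv.nonneg j hjs
    linarith [hθ j]
  refine { zero := hzero', nonneg := hnonneg', strict := ?_, single := ?_,
           tok1 := ?_, tok2 := ?_, tok3 := ?_ }
  · -- strict
    intro hkm j hj
    rcases Nat.lt_or_ge m ((k : ℕ) + 1) with hmk | hmk
    · -- m = k : first strict step
      have hmke : m = (k : ℕ) := by omega
      have hsingle := hv.single (by omega)
      have hs'k : s' = k := by
        apply Fin.ext
        rw [hs'val, mod_small (by omega), hmke]
      have hvs' : v s' = 1 := by rw [hsingle, hs'k, Pi.single_apply, if_pos rfl]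
      have hpos : 0 < phiC n φm φp m s' * v s' := by
        rw [hvs', mul_one, hs'k, phiC_k_a hn k hk (by omega) (by omega)]
        exact (hφ k).2
      have hvj : v j = 0 := by
        rw [hsingle, Pi.single_apply, if_neg (by rw [← hs'k]; exact hj)]
      rw [hmulw j, hvj, mul_zero, zero_add]
      exact hθpos hpos j
    · -- k + 1 ≤ m
      have hpos : 0 < phiC n φm φp m s' * v s' := hv.strict hmk s' hss
      rw [hmulw j]
      by_cases hjs : j = s
      · rw [hjs, hv.zero, mul_zero, zero_add]
        exact hθpos hpos s
      · have h1 : 0 < phiC n φm φp (m + 1) j * v j := by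
          rw [hPnew j hj]
          exact hv.strict hmk j hjs
        linarith [hθpos hpos j]
  · -- single
    intro h
    have hsingle := hv.single (by omega)
    have hs'k : s' ≠ k := by
      intro hcon
      have := congrArg Fin.val hcon
      rw [hs'val, mod_small (by omega)] at this
      omega
    have hvs' : v s' = 0 := by
      rw [hsingle, Pi.single_apply, if_neg hs'k]
    funext j
    rw [hwapp j, hvs', mul_zero, add_zero, hsingle]
  · -- tok1
    intro h1 h2
    have h0s' : (0 : Fin n) ≠ s' := by
      intro hcon
      have := congrArg Fin.val hcon
      rw [hs'val, mod_small (by omega), val_zero'] at this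
      omega
    have hP10 : phiC n φm φp (m + 1) 0 = φm 0 := phiC_zero_first hn (by omega) (by omega)
    rcases Nat.lt_or_ge m ((k : ℕ) + 1) with hmk | hmk
    · -- jump 1 : m = k
      have hmke : m = (k : ℕ) := by omega
      have hsingle := hv.single (by omega)
      have hs'k : s' = k := by
        apply Fin.ext
        rw [hs'val, mod_small (by omega), hmke]
      have hvs' : v s' = 1 := by rw [hsingle, hs'k, Pi.single_apply, if_pos rfl]
      have hv0 : v 0 = 0 := by
        rw [hsingle, Pi.single_apply, if_neg (fun hcon => hkF (by rw [hcon]))]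
      have hP1k : phiC n φm φp (m + 1) k = φm k := phiC_k_b hn k hk (by omega) (by omega)
      rw [hwapp 0, hv0, hvs', zero_add, mul_one]
      have hd : γ k * φm k * dcoef n γ φm φp (m + 1) 0 = -(γ 0 * φm 0) := by
        unfold dcoef
        rw [← hs'def, hs'k, hP10, hP1k]
        have hγk := (hγ k).ne'
        have hφmk := (hφ k).1.ne
        field_simp
      rw [hd]
    · -- stay
      have htok1 := hv.tok1 hmk (by omega)
      have hθ0 := hθ 0
      rw [hP10] at hθ0
      have hθle : dcoef n γ φm φp (m + 1) 0 * v s' ≤ 0 := by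
        nlinarith [(hφ 0).1]
      rw [hwapp 0]
      have hnegk : γ k * φm k < 0 := mul_neg_of_pos_of_neg (hγ k) (hφ k).1
      nlinarith
  · -- tok2
    intro h1 h2
    rcases Nat.lt_or_ge m (n + 1) with hmn | hmn
    · -- jump 2 : m = n
      have hmne : m = n := by omega
      have hs'0 : s' = 0 := by
        apply Fin.ext
        rw [hs'val, val_zero', hmne, Nat.mod_self]
      have htok1 := hv.tok1 (by omega) (by omega)
      have hP1k : phiC n φm φp (m + 1) k = φm k := phiC_k_b hn k hk (by omega) (by omega)
      have hP10 : phiC n φm φp (m + 1) 0 = φp 0 := phiC_zero_second hn (by omega) (by omega)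
      have hvk : v k ≤ 0 := by
        by_cases hks : k = s
        · rw [hks, hv.zero]
        · have := hv.nonneg k hks
          rw [phiC_k_b hn k hk (by omega) (by omega)] at this
          nlinarith [(hφ k).1]
      have hd : γ 0 * (φp 0 * (dcoef n γ φm φp (m + 1) k * v 0))
          = -(γ k * φm k * v 0) := by
        unfold dcoef
        rw [← hs'def, hs'0, hP1k, hP10]
        have := (hγ (0 : Fin n)).ne'
        have := (hφ (0 : Fin n)).2.ne'
        field_simp
      rw [hwapp k, hs'0, mul_add]
      have hX : φp 0 * (dcoef n γ φm φp (m + 1) k * v 0) ≤ φm 0 := by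
        have h5 : γ 0 * (φp 0 * (dcoef n γ φm φp (m + 1) k * v 0)) ≤ γ 0 * φm 0 := by
          rw [hd]; linarith
        exact (mul_le_mul_iff_right₀ (hγ 0)).mp h5
      nlinarith [(hφ 0).2]
    · -- stay
      have htok2 := hv.tok2 hmn (by omega)
      have hP1k : phiC n φm φp (m + 1) k = φm k := phiC_k_b hn k hk (by omega) (by omega)
      have hθk := hθ k
      rw [hP1k] at hθk
      have hθle : dcoef n γ φm φp (m + 1) k * v s' ≤ 0 := by
        nlinarith [(hφ k).1]
      rw [hwapp k]
      nlinarith [(hφ 0).2]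
  · -- tok3
    intro h1 h2
    rcases Nat.lt_or_ge m (n + (k : ℕ) + 1) with hmj | hmj
    · -- jump 3 : m = n + k
      have hmje : m = n + (k : ℕ) := by omega
      have hs'k : s' = k := by
        apply Fin.ext
        rw [hs'val, hmje, mod_mid (by omega) (by omega)]
        omega
      have htok2 := hv.tok2 (by omega) (by omega)
      have hP10 : phiC n φm φp (m + 1) 0 = φp 0 := phiC_zero_second hn (by omega) (by omega)
      have hP1k : phiC n φm φp (m + 1) k = φp k := phiC_k_c hn k hk (by omega) (by omega)
      have hv0 : 0 ≤ v 0 := by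
        by_cases h0s : (0 : Fin n) = s
        · rw [h0s, hv.zero]
        · have := hv.nonneg 0 h0s
          rw [phiC_zero_second hn (by omega) (by omega)] at this
          nlinarith [(hφ 0).2]
      have hd : γ k * φp k * (dcoef n γ φm φp (m + 1) 0 * v k)
          = -(γ 0 * (φp 0 * v k)) := by
        unfold dcoef
        rw [← hs'def, hs'k, hP10, hP1k]
        have := (hγ k).ne'
        have := (hφ k).2.ne'
        field_simp
      constructor
      · rw [hwapp 0, hs'k, mul_add, hd]
        nlinarith [mul_pos (hγ k) (hφ k).2, (hγ 0), (hφ 0).1]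
      · intro hkn1
        have hk1' : (1 : ℕ) < (k : ℕ) := by omega
        have h0s : (0 : Fin n) ≠ s := by
          intro hcon
          have := congrArg Fin.val hcon
          rw [val_zero', hsval, hmje, mod_mid (by omega) (by omega)] at this
          omega
        have hstrict := hv.strict (by omega) 0 h0s
        rw [phiC_zero_second hn (by omega) (by omega)] at hstrict
        have hv0' : 0 < v 0 := by nlinarith [(hφ 0).2]
        rw [hwapp 0, hs'k, mul_add, hd]
        nlinarith [mul_pos (hγ k) (hφ k).2, (hγ 0), (hφ 0).1]
    · -- stay
      have htok3 := hv.tok3 hmj (by omega)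
      have hP10 : phiC n φm φp (m + 1) 0 = φp 0 := phiC_zero_second hn (by omega) (by omega)
      have hθ0 := hθ 0
      rw [hP10] at hθ0
      have hθge : 0 ≤ dcoef n γ φm φp (m + 1) 0 * v s' := by
        nlinarith [(hφ 0).2]
      have hpos : 0 < γ k * φp k := mul_pos (hγ k) (hφ k).2
      constructor
      · rw [hwapp 0]
        nlinarith [htok3.1]
      · intro hkn1
        have := htok3.2 hkn1
        rw [hwapp 0]
        nlinarith


/-- The iterated linearized states: `iterW t` is the state after applying the
linearized steps `2, …, t+1` to the `k`-th basis vector. -/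
def iterW (n : ℕ) [NeZero n] (γ φm φp : Fin n → ℝ) (k : Fin n) : ℕ → (Fin n → ℝ)
  | 0 => Pi.single k 1
  | t + 1 => stepL n γ φm φp (t + 2) (iterW n γ φm φp k t)

lemma inv_iterW (hγ : ∀ i, 0 < γ i) (hφ : ∀ i, φm i < 0 ∧ 0 < φp i) (hn : 3 ≤ n)
    {k : Fin n} (hk : (k : ℕ) ≠ 0) :
    ∀ t, t ≤ 2 * n - 1 → MInv n γ φm φp k (t + 1) (iterW n γ φm φp k t) := by
  intro t
  induction t with
  | zero => intro _; exact inv_base hφ hn k hk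
  | succ t ih =>
    intro ht
    have h1 := ih (by omega)
    exact inv_step hγ hφ hn hk (by omega) (by omega) h1

lemma sIdx_2n1 (hn : 3 ≤ n) : (sIdx n (2 * n + 1) : ℕ) = 0 := by
  rw [sIdx_val]
  simp [Nat.mul_mod_right]

lemma final_bound (hγ : ∀ i, 0 < γ i) (hφ : ∀ i, φm i < 0 ∧ 0 < φp i) (hn : 3 ≤ n)
    {k : Fin n} (hk : (k : ℕ) ≠ 0) (j : Fin n) (hj : (j : ℕ) ≠ 0) :
    (if j = k then (1 : ℝ) else 0) < iterW n γ φm φp k (2 * n) j := by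
  have hkn := k.isLt
  have hk1 : 1 ≤ (k : ℕ) := Nat.one_le_iff_ne_zero.mpr hk
  have h2n1 : 2 * n - 1 + 1 = 2 * n := by omega
  have hInv20 : MInv n γ φm φp k (2 * n) (iterW n γ φm φp k (2 * n - 1)) := by
    have := inv_iterW hγ hφ hn hk (2 * n - 1) le_rfl
    rwa [h2n1] at this
  have hstep : iterW n γ φm φp k (2 * n)
      = stepL n γ φm φp (2 * n + 1) (iterW n γ φm φp k (2 * n - 1)) := by
    conv_lhs => rw [← h2n1]
    show stepL n γ φm φp (2 * n - 1 + 2) _ = _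
    rw [show 2 * n - 1 + 2 = 2 * n + 1 by omega]
  have hInv21 : MInv n γ φm φp k (2 * n + 1) (iterW n γ φm φp k (2 * n)) := by
    rw [hstep]
    exact inv_step hγ hφ hn hk (by omega) le_rfl hInv20
  set v := iterW n γ φm φp k (2 * n - 1) with hvdef
  have hs'0 : (sIdx n (2 * n + 1) : ℕ) = 0 := sIdx_2n1 hn
  have hsval : (sIdx n (2 * n) : ℕ) = n - 1 := by
    rw [sIdx_val, mod_mid (by omega) (by omega)]
    omega
  -- the coordinate `sIdx n (2n+1)` of the final wall is `0`
  have hs'eq : sIdx n (2 * n + 1) = (0 : Fin n) := Fin.ext (by rw [hs'0]; rfl)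
  by_cases hjk : j = k
  · -- diagonal entry
    subst hjk
    rw [if_pos rfl, hstep]
    have hwk : stepL n γ φm φp (2 * n + 1) v j
        = v j + dcoef n γ φm φp (2 * n + 1) j * v 0 := by
      show v j + _ * v (sIdx n (2 * n + 1)) = _
      rw [hs'eq]
    rw [hwk]
    have htok3 := hInv20.tok3 (by omega) le_rfl
    have hP21k : phiC n φm φp (2 * n + 1) j = φp j := phiC_k_c hn j hj (by omega) (by omega)
    have hP210 : phiC n φm φp (2 * n + 1) 0 = φm 0 := phiC_zero_last hn
    have hA : (0:ℝ) < -(γ 0 * φm 0) := by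
      have := mul_pos (hγ 0) (neg_pos.mpr (hφ 0).1)
      nlinarith
    have hdid : -(γ 0 * φm 0) * (dcoef n γ φm φp (2 * n + 1) j * v 0)
        = γ j * φp j * v 0 := by
      unfold dcoef
      rw [hs'eq, hP21k, hP210]
      have := (hγ (0 : Fin n)).ne'
      have := (hφ (0 : Fin n)).1.ne
      field_simp
    by_cases hks : (j : ℕ) = n - 1
    · -- `j = k` is the last exit coordinate: `v k = 0`, strict token
      have hvk0 : v j = 0 := by
        have := hInv20.zero
        rwa [show sIdx n (2 * n) = j from Fin.ext (by rw [hsval, hks])] at this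
      have hstrict := htok3.2 hks
      rw [hvk0, zero_add]
      nlinarith
    · -- `v k > 0`, token `≥ 1`
      have hvkpos : 0 < v j := by
        have h5 := hInv20.strict (by omega) j
          (fun hcon => hks (by rw [← hsval, hcon]))
        rw [phiC_k_c hn j hj (by omega) (by omega)] at h5
        nlinarith [(hφ j).2]
      have hge := htok3.1
      nlinarith
  · -- off-diagonal entry
    rw [if_neg hjk]
    have h5 := hInv21.strict (by omega) j
      (fun hcon => hj (by rw [hcon, hs'0]))
    rw [phiC_k_c hn j hj (by omega) (by omega)] at h5
    nlinarith [(hφ j).2]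


lemma transMap_zero (hφ : ∀ i, φm i < 0 ∧ 0 < φp i) (m : ℕ) :
    transMap n γ φm φp m 0 = 0 := by
  funext j
  unfold transMap
  rw [Pi.zero_apply, Pi.zero_apply, sub_zero, div_self (phiC_ne_zero hφ m _),
    Real.one_rpow]
  ring

/-- The linearization of the `m`-th transition map at the origin, as a continuous
linear map. -/
def Lclm (n : ℕ) [NeZero n] (γ φm φp : Fin n → ℝ) (m : ℕ) :
    (Fin n → ℝ) →L[ℝ] (Fin n → ℝ) :=
  ContinuousLinearMap.pi fun j =>
    ContinuousLinearMap.proj j +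
      dcoef n γ φm φp m j • ContinuousLinearMap.proj (sIdx n m)

lemma Lclm_apply (m : ℕ) (v : Fin n → ℝ) :
    Lclm n γ φm φp m v = stepL n γ φm φp m v := by
  funext j
  simp [Lclm, stepL, ContinuousLinearMap.pi_apply, ContinuousLinearMap.add_apply,
    ContinuousLinearMap.smul_apply, ContinuousLinearMap.proj_apply]

lemma hasFDerivAt_transMap (hγ : ∀ i, 0 < γ i) (hφ : ∀ i, φm i < 0 ∧ 0 < φp i)
    (m : ℕ) : HasFDerivAt (transMap n γ φm φp m) (Lclm n γ φm φp m) 0 := by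
  set s := sIdx n m with hsdef
  set Ps := phiC n φm φp m s with hPsdef
  have hPs : Ps ≠ 0 := phiC_ne_zero hφ m s
  have hγs : (γ s) ≠ 0 := (hγ s).ne'
  rw [hasFDerivAt_pi']
  intro j
  set r := γ j / γ s with hrdef
  have h0 : Ps / (Ps - (0 : ℝ)) = 1 := by rw [sub_zero, div_self hPs]
  -- scalar derivative of t ↦ (Ps / (Ps - t)) ^ r at 0
  have hinner : HasDerivAt (fun t : ℝ => Ps / (Ps - t))
      ((0 * (Ps - 0) - Ps * (0 - 1)) / (Ps - 0) ^ 2) 0 :=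
    (hasDerivAt_const 0 Ps).div ((hasDerivAt_const 0 Ps).sub (hasDerivAt_id 0))
      (by rw [sub_zero]; exact hPs)
  have hrpow' : HasDerivAt (fun y : ℝ => y ^ r) (r * 1 ^ (r - 1))
      (Ps / (Ps - (0 : ℝ))) := by
    rw [h0]
    exact Real.hasDerivAt_rpow_const (Or.inl one_ne_zero)
  have hcomp : HasDerivAt (fun t : ℝ => (Ps / (Ps - t)) ^ r)
      ((r * 1 ^ (r - 1)) * ((0 * (Ps - 0) - Ps * (0 - 1)) / (Ps - 0) ^ 2)) 0 :=
    hrpow'.comp (h := fun t : ℝ => Ps / (Ps - t)) 0 hinner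
  have hg : HasFDerivAt (fun x : Fin n → ℝ => (Ps / (Ps - x s)) ^ r)
      (((r * 1 ^ (r - 1)) * ((0 * (Ps - 0) - Ps * (0 - 1)) / (Ps - 0) ^ 2)) •
        ContinuousLinearMap.proj (R := ℝ) (φ := fun _ : Fin n => ℝ) s) 0 :=
    hcomp.comp_hasFDerivAt (f := fun x : Fin n → ℝ => x s) (0 : Fin n → ℝ) (hasFDerivAt_apply s 0)
  have hxj : HasFDerivAt (fun x : Fin n → ℝ => x j - phiC n φm φp m j)
      (ContinuousLinearMap.proj (R := ℝ) (φ := fun _ : Fin n => ℝ) j) 0 := by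
    simpa using (hasFDerivAt_apply j (0 : Fin n → ℝ)).sub_const (phiC n φm φp m j)
  have hmul := (hxj.mul hg).const_add (phiC n φm φp m j)
  have heq : (fun x : Fin n → ℝ => transMap n γ φm φp m x j)
      = fun x : Fin n → ℝ => phiC n φm φp m j +
        ((x j - phiC n φm φp m j) * (Ps / (Ps - x s)) ^ r) := by
    funext x
    rfl
  rw [heq]
  convert hmul using 1
  · rfl
  unfold Lclm
  rw [ContinuousLinearMap.proj_pi]
  ext v
  simp only [ContinuousLinearMap.add_apply, ContinuousLinearMap.smul_apply,
    ContinuousLinearMap.proj_apply, ContinuousLinearMap.coe_smul', Pi.smul_apply,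
    Pi.zero_apply, smul_eq_mul]
  rw [h0, Real.one_rpow, Real.one_rpow]
  unfold dcoef
  rw [← hsdef, ← hPsdef, ← hrdef]
  field_simp
  ring


def Fmap (n : ℕ) [NeZero n] (γ φm φp : Fin n → ℝ) (t : ℕ) (x : Fin n → ℝ) :
    Fin n → ℝ :=
  (List.range t).foldl (fun y k => transMap n γ φm φp (k + 2) y) x

lemma Fmap_succ (t : ℕ) (x : Fin n → ℝ) :
    Fmap n γ φm φp (t + 1) x = transMap n γ φm φp (t + 2) (Fmap n γ φm φp t x) := by
  unfold Fmap
  rw [List.range_succ, List.foldl_append]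
  rfl

lemma Fmap_zero (hφ : ∀ i, φm i < 0 ∧ 0 < φp i) : ∀ t, Fmap n γ φm φp t 0 = 0 := by
  intro t
  induction t with
  | zero => rfl
  | succ t ih => rw [Fmap_succ, ih, transMap_zero hφ]

def Aclm (n : ℕ) [NeZero n] (γ φm φp : Fin n → ℝ) : ℕ → ((Fin n → ℝ) →L[ℝ] (Fin n → ℝ))
  | 0 => ContinuousLinearMap.id ℝ (Fin n → ℝ)
  | t + 1 => (Lclm n γ φm φp (t + 2)).comp (Aclm n γ φm φp t)

lemma hasFDerivAt_Fmap (hγ : ∀ i, 0 < γ i) (hφ : ∀ i, φm i < 0 ∧ 0 < φp i) :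
    ∀ t, HasFDerivAt (Fmap n γ φm φp t) (Aclm n γ φm φp t) 0 := by
  intro t
  induction t with
  | zero => exact hasFDerivAt_id 0
  | succ t ih =>
    have hcomp : HasFDerivAt (fun x => transMap n γ φm φp (t + 2) (Fmap n γ φm φp t x))
        ((Lclm n γ φm φp (t + 2)).comp (Aclm n γ φm φp t)) 0 := by
      have h1 : HasFDerivAt (transMap n γ φm φp (t + 2)) (Lclm n γ φm φp (t + 2))
          (Fmap n γ φm φp t 0) := by
        rw [Fmap_zero hφ]
        exact hasFDerivAt_transMap hγ hφ (t + 2)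
      exact h1.comp 0 ih
    have : Fmap n γ φm φp (t + 1) = fun x => transMap n γ φm φp (t + 2) (Fmap n γ φm φp t x) :=
      funext fun x => Fmap_succ t x
    rw [this]
    exact hcomp

lemma Aclm_single (k : Fin n) :
    ∀ t, Aclm n γ φm φp t (Pi.single k 1) = iterW n γ φm φp k t := by
  intro t
  induction t with
  | zero => rfl
  | succ t ih =>
    show (Lclm n γ φm φp (t + 2)) (Aclm n γ φm φp t (Pi.single k 1)) = _
    rw [ih, Lclm_apply]
    rfl

end NFL



open Polynomial in
lemma spectral_aux {d : Type*} [Fintype d] [DecidableEq d] [Nonempty d]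
    (A : Matrix d d ℝ) (hd : ∀ j, 1 < A j j) :
    ∃ μ : ℂ, μ ∈ spectrum ℂ (A.map Complex.ofReal) ∧ 1 < ‖μ‖ := by
  set B : Matrix d d ℂ := A.map Complex.ofReal with hB
  by_contra hcon
  push_neg at hcon
  -- every root of the charpoly is in the spectrum
  have hroot : ∀ μ : ℂ, B.charpoly.IsRoot μ → μ ∈ spectrum ℂ B := by
    intro μ hμ
    rw [spectrum.mem_iff]
    intro hunit
    have hdet : (algebraMap ℂ (Matrix d d ℂ) μ - B).det = B.charpoly.eval μ := by
      have h1 : B.charpoly.eval μ = ((Matrix.charmatrix B).map (Polynomial.evalRingHom μ)).det := by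
        rw [Matrix.charpoly,
          show eval μ B.charmatrix.det = (evalRingHom μ) B.charmatrix.det from rfl,
          RingHom.map_det, RingHom.mapMatrix_apply]
      rw [h1]
      congr 1
      ext i j
      by_cases hij : i = j
      · subst hij
        simp [Matrix.charmatrix_apply_eq, Matrix.algebraMap_matrix_apply]
      · simp [Matrix.charmatrix_apply_ne _ _ _ hij, Matrix.algebraMap_matrix_apply, hij]
    rw [Matrix.isUnit_iff_isUnit_det, hdet, hμ.eq_zero] at hunit
    exact (not_isUnit_zero : ¬ IsUnit (0:ℂ)) hunit
  -- cardinality of roots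
  have hcard : B.charpoly.roots.card = Fintype.card d := by
    rw [(Polynomial.splits_iff_card_roots).mp (IsAlgClosed.splits B.charpoly),
      Matrix.charpoly_natDegree_eq_dim]
  -- trace = sum of roots
  have htr : B.trace = B.charpoly.roots.sum := Matrix.trace_eq_sum_roots_charpoly B
  have htrval : B.trace = Complex.ofReal (∑ j, A j j) := by
    simp [Matrix.trace, hB, Matrix.diag]
  have h1 : (Fintype.card d : ℝ) < ∑ j, A j j := by
    have := Finset.sum_lt_sum_of_nonempty (s := (Finset.univ : Finset d))
      (f := fun _ => (1:ℝ)) (g := fun j => A j j) Finset.univ_nonempty (fun j _ => hd j)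
    simpa using this
  have h2 : ‖B.trace‖ ≤ (Fintype.card d : ℝ) := by
    rw [htr]
    calc ‖B.charpoly.roots.sum‖ ≤ (B.charpoly.roots.map norm).sum := norm_multiset_sum_le _
    _ ≤ (B.charpoly.roots.map norm).card • (1:ℝ) := by
        apply Multiset.sum_le_card_nsmul
        intro x hx
        obtain ⟨μ, hμ, rfl⟩ := Multiset.mem_map.mp hx
        exact hcon μ (hroot μ (Polynomial.isRoot_of_mem_roots hμ))
    _ = (Fintype.card d : ℝ) := by simp [hcard]
  have h3 : ∑ j, A j j ≤ ‖B.trace‖ := by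
    rw [htrval]
    calc ∑ j, A j j ≤ |∑ j, A j j| := le_abs_self _
    _ = ‖(Complex.ofReal (∑ j, A j j))‖ := by rw [Complex.norm_real]; rfl
  linarith

end

/-- **`DT(0) − Id > 0`, hence the spectral radius of `DT(0)` exceeds `1` (`n ≥ 3`).**
The Poincaré map fixes the origin, `T(0) = 0`, and at `0` its `(n−1) × (n−1)` Jacobian
matrix `DT(0)` (rows and columns indexed by the wall coordinates `j ≠ s_1`) satisfies
`DT(0) − Id > 0` entrywise: every diagonal entry is `> 1` and every off-diagonal entry is
`> 0`.  Consequently some (complex) eigenvalue of `DT(0)` has modulus `> 1`, i.e. the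
spectral radius of `DT(0)` is strictly greater than `1`. -/
theorem poincare_map_jacobian_at_origin_exceeds_identity
    (n : ℕ) [NeZero n] (hn : 3 ≤ n)
    (γ φm φp : Fin n → ℝ) (hγ : ∀ i, 0 < γ i)
    (hφ : ∀ i, φm i < 0 ∧ 0 < φp i) :
    poincare n γ φm φp 0 = 0 ∧
    (∀ j k : Fin n, j ≠ sIdx n 1 → k ≠ sIdx n 1 →
      (if j = k then (1 : ℝ) else 0)
        < fderiv ℝ (poincare n γ φm φp) 0 (Pi.single k 1) j) ∧
    ∃ μ : ℂ, μ ∈ spectrum ℂ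
        ((Matrix.of fun j k : {j : Fin n // j ≠ sIdx n 1} =>
          fderiv ℝ (poincare n γ φm φp) 0 (Pi.single (k : Fin n) 1) (j : Fin n)).map
          Complex.ofReal) ∧
      1 < ‖μ‖ := by
  have hn0 : 0 < n := by omega
  have hval1 : (sIdx n 1 : ℕ) = 0 := Nat.zero_mod n
  have hfd : fderiv ℝ (poincare n γ φm φp) 0 = NFL.Aclm n γ φm φp (2 * n) :=
    (NFL.hasFDerivAt_Fmap hγ hφ (2 * n)).fderiv
  have hzero1 : poincare n γ φm φp 0 = 0 := NFL.Fmap_zero hφ (2 * n)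
  have hkey : ∀ j k : Fin n, j ≠ sIdx n 1 → k ≠ sIdx n 1 →
      (if j = k then (1 : ℝ) else 0)
        < fderiv ℝ (poincare n γ φm φp) 0 (Pi.single k 1) j := by
    intro j k hjne hkne
    rw [hfd, NFL.Aclm_single k (2 * n)]
    have hkk : (k : ℕ) ≠ 0 := by
      intro h
      exact hkne (Fin.ext (by rw [h, hval1]))
    have hjj : (j : ℕ) ≠ 0 := by
      intro h
      exact hjne (Fin.ext (by rw [h, hval1]))
    exact NFL.final_bound hγ hφ hn hkk j hjj
  refine ⟨hzero1, hkey, ?_⟩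
  have hnonempty : Nonempty {j : Fin n // j ≠ sIdx n 1} := by
    refine ⟨⟨⟨1, by omega⟩, ?_⟩⟩
    intro h
    have := congrArg Fin.val h
    rw [hval1] at this
    simp at this
  obtain ⟨μ, hμ, h1⟩ := spectral_aux
    (Matrix.of fun j k : {j : Fin n // j ≠ sIdx n 1} =>
      fderiv ℝ (poincare n γ φm φp) 0 (Pi.single (k : Fin n) 1) (j : Fin n))
    (fun j => by
      have := hkey j j j.2 j.2
      simpa using this)
  exact ⟨μ, hμ, h1⟩
end
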